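/- arXiv:1112.1676 — 9 statements merged into one kernel-verified Lean document; each statement's English description precedes it below -/
import Mathlib

section
/- Let p be a prime and A a reduced commutative ring in which p·1_A = 0. Then the ring W(A) of p-typical Witt vectors of A is torsion-free as an additive group: if d is a nonzero integer and x ∈ W(A) satisfies d·x = 0, then x = 0. -/
section aux

variable (p : ℕ) [hp : Fact p.Prime] (A : Type*) [CommRing A] [CharP A p] [IsReduced A]

lemma wittAux_p_mul (x : WittVector p A) (h : (p : WittVector p A) * x = 0) : x = 0 := by
  have hv : WittVector.verschiebung (WittVector.frobenius x) = 0 := by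
    rw [WittVector.verschiebung_frobenius, mul_comm, h]
  have hf : WittVector.frobenius x = 0 := by
    ext n
    have := congrArg (fun y => WittVector.coeff y (n + 1)) hv
    simpa [WittVector.verschiebung_coeff_succ] using this
  ext n
  have : x.coeff n ^ p = 0 := by
    have := congrArg (fun y => WittVector.coeff y n) hf
    simpa [WittVector.coeff_frobenius_charP] using this
  simpa using IsReduced.eq_zero _ ⟨p, this⟩

lemma wittAux_unit (m : ℕ) (hm : ¬ p ∣ m) : IsUnit (m : WittVector p A) := by
  have hu : IsUnit (m : ℤ_[p]) := by
    rw [PadicInt.isUnit_iff]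
    have : ¬ ‖(m : ℤ_[p])‖ < 1 := by
      rw [show ((m : ℤ_[p]) = ((m : ℤ) : ℤ_[p])) by push_cast; ring,
        PadicInt.norm_int_lt_one_iff_dvd]
      exact_mod_cast hm
    have h1 : ‖(m : ℤ_[p])‖ ≤ 1 := PadicInt.norm_le_one _
    linarith [lt_or_eq_of_le h1]
  have := hu.map (WittVector.equiv p).symm.toRingHom
  rw [map_natCast] at this
  have := this.map (WittVector.map (p := p) (ZMod.castHom (dvd_refl p) A))
  rwa [map_natCast] at this

lemma wittAux_pk (k : ℕ) (x : WittVector p A)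
    (h : (p : WittVector p A) ^ k * x = 0) : x = 0 := by
  induction k generalizing x with
  | zero => simpa using h
  | succ n ih =>
    apply wittAux_p_mul p A
    apply ih
    rw [pow_succ, mul_comm ((p : WittVector p A) ^ n), mul_assoc] at h
    linear_combination h

end aux

/-- For a prime `p` and a reduced commutative ring `A` of characteristic `p`, the ring
`W(A)` of `p`-typical Witt vectors of `A` is torsion-free as an additive group. -/
theorem wittVector_torsionFree (p : ℕ) [Fact p.Prime] (A : Type*) [CommRing A] [CharP A p]
    [IsReduced A] (d : ℤ) (hd : d ≠ 0) (x : WittVector p A) (hx : d • x = 0) :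
    x = 0 := by
  have hp : p.Prime := Fact.out
  have hx' : ((d.natAbs : ℤ) : WittVector p A) * x = 0 := by
    rcases Int.natAbs_eq d with h | h
    · rw [← h, ← zsmul_eq_mul, hx]
    · have : ((d : WittVector p A)) * x = 0 := by rw [← zsmul_eq_mul, hx]
      rw [h] at this
      push_cast at this ⊢
      linear_combination -this
  set n := d.natAbs with hn
  have hn0 : n ≠ 0 := Int.natAbs_ne_zero.mpr hd
  have hfact : n = p ^ n.factorization p * (n / p ^ n.factorization p) :=
    (Nat.ordProj_mul_ordCompl_eq_self n p).symm
  have hndvd : ¬ p ∣ (n / p ^ n.factorization p) := Nat.not_dvd_ordCompl hp hn0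
  have hunit := wittAux_unit p A _ hndvd
  have hpk : ((p : WittVector p A)) ^ (n.factorization p) * x = 0 := by
    have h1 : ((n : WittVector p A)) * x = 0 := by exact_mod_cast hx'
    rw [hfact] at h1
    push_cast at h1
    exact hunit.mul_left_cancel (by rw [mul_zero]; linear_combination h1)
  exact wittAux_pk p A _ x hpk
end

section
/- Let p be a prime, A a reduced commutative ring with p·1_A = 0, n ≥ 1 and t ≥ 1 integers, and let X ∈ Σ_{1,t} ⊆ M_n(W(A)). Then for every integer v ≥ 1 there exists a (necessarily unique, by torsion-freeness of W(A)) matrix Z ∈ M_n(W(A)) such that v!·Z = X^v and Z ∈ Σ_{1,t}. -/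
/-- The matrix of `j`-th Witt coordinates of a matrix of Witt vectors. -/
def wittPi (p : ℕ) {A : Type*} {n : ℕ} (j : ℕ)
    (X : Matrix (Fin n) (Fin n) (WittVector p A)) : Matrix (Fin n) (Fin n) A :=
  X.map fun w => w.coeff j

/-- `Σ_{1,t}`: matrices of Witt vectors whose `0`-th Witt coordinate matrix vanishes and whose
`1`-st Witt coordinate matrix is `t`-step nilpotent. -/
def SigmaOneT (p : ℕ) {A : Type*} [CommRing A] {n : ℕ} (t : ℕ) :
    Set (Matrix (Fin n) (Fin n) (WittVector p A)) :=
  {X | wittPi p 0 X = 0 ∧ wittPi p 1 X ^ t = 0}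

open WittVector

section aux
variable {p : ℕ} [hp : Fact p.Prime] {A : Type*} [CommRing A] {n : ℕ}

lemma versch_mul_versch (a b : WittVector p A) :
    verschiebung a * verschiebung b = p • verschiebung (a * b) := by
  rw [← verschiebung_mul_frobenius, frobenius_verschiebung]
  have : a * (b * (p : WittVector p A)) = p • (a * b) := by
    rw [nsmul_eq_mul]; ring
  rw [this, map_nsmul]

lemma mapV_nsmul (k : ℕ) (M : Matrix (Fin n) (Fin n) (WittVector p A)) :
    ((k • M).map ⇑(verschiebung (p := p) (R := A))) = k • (M.map ⇑verschiebung) := by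
  refine Matrix.ext fun i j => ?_
  simp only [Matrix.map_apply, Matrix.smul_apply]
  exact map_nsmul (verschiebung (p := p) (R := A)) _ _

lemma mapV_mul (M N : Matrix (Fin n) (Fin n) (WittVector p A)) :
    (M.map ⇑verschiebung) * (N.map ⇑verschiebung)
      = p • ((M * N).map ⇑(verschiebung (p := p) (R := A))) := by
  ext i j
  simp [Matrix.mul_apply, Matrix.map_apply, Matrix.smul_apply, versch_mul_versch,
    Finset.smul_sum, map_sum]

lemma mapV_pow (M : Matrix (Fin n) (Fin n) (WittVector p A)) (v : ℕ) (hv : 1 ≤ v) :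
    (M.map ⇑verschiebung) ^ v = p ^ (v - 1) • ((M ^ v).map ⇑(verschiebung (p := p) (R := A))) := by
  induction v, hv using Nat.le_induction with
  | base => simp
  | succ v hv ih =>
    have hv1 : v - 1 + 1 = v := by omega
    rw [pow_succ, ih, smul_mul_assoc, mapV_mul, ← pow_succ, smul_smul, ← pow_succ, hv1,
      Nat.add_sub_cancel]

end aux

/-- For `X ∈ Σ_{1,t}` and `v ≥ 1`, the matrix `X^v / v!` exists in `M_n(W(A))` and
belongs to `Σ_{1,t}`. -/
theorem div_factorial_pow_mem_sigmaOneT (p : ℕ) [Fact p.Prime] (A : Type*) [CommRing A]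
    [CharP A p] [IsReduced A] (n t : ℕ) (hn : 1 ≤ n) (ht : 1 ≤ t)
    (X : Matrix (Fin n) (Fin n) (WittVector p A)) (hX : X ∈ SigmaOneT p t)
    (v : ℕ) (hv : 1 ≤ v) :
    ∃ Z : Matrix (Fin n) (Fin n) (WittVector p A),
      v.factorial • Z = X ^ v ∧ Z ∈ SigmaOneT p t := by
  classical
  have hp : Fact p.Prime := inferInstance
  obtain ⟨hX0, hX1⟩ := hX
  -- the "shifted" matrix
  set Y : Matrix (Fin n) (Fin n) (WittVector p A) := X.map (fun w => w.shift 1) with hYdef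
  have hXY : X = Y.map ⇑verschiebung := by
    refine Matrix.ext fun i j => ?_
    have h0 : ∀ i' < 0 + 1, (X i j).coeff i' = 0 := by
      intro i' hi'
      interval_cases i'
      have := congrFun (congrFun hX0 i) j
      simpa [wittPi, Matrix.map_apply] using this
    have h1 : verschiebung ((X i j).shift 1) = (X i j).shift 0 :=
      WittVector.verschiebung_shift (X i j) 0 h0
    have h2 : (X i j).shift 0 = X i j := by
      ext k
      simp [WittVector.shift_coeff]
    simp only [hYdef, Matrix.map_apply]
    rw [h1, h2]
  -- arithmetic of `v!`
  set ν := (v.factorial).factorization p with hνdef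
  set m := v.factorial / p ^ ν with hmdef
  have hfac : p ^ ν * m = v.factorial := Nat.ordProj_mul_ordCompl_eq_self v.factorial p
  have hpm : ¬ p ∣ m := Nat.not_dvd_ordCompl hp.out (Nat.factorial_ne_zero v)
  have hne : p.digits v ≠ [] := Nat.digits_ne_nil_iff_ne_zero.mpr (by omega)
  have hlast : (p.digits v).getLast hne ≠ 0 := Nat.getLast_digit_ne_zero p (by omega)
  have hsum : 1 ≤ (p.digits v).sum :=
    le_trans (Nat.one_le_iff_ne_zero.mpr hlast)
      (List.single_le_sum (fun x _ => Nat.zero_le x) _ (List.getLast_mem hne))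
  have hνle : ν ≤ v - 1 := by
    set w := (p - 1) * padicValNat p (v.factorial) with hw
    have hleg : w = v - (p.digits v).sum := sub_one_mul_padicValNat_factorial v
    have h1 : ν = padicValNat p v.factorial := Nat.factorization_def _ hp.out
    have hp2 : 2 ≤ p := hp.out.two_le
    have h2 : padicValNat p v.factorial ≤ w := by
      rw [hw]
      exact Nat.le_mul_of_pos_left _ (by omega)
    omega
  set e := v - 1 - ν with hedef
  have he : ν + e = v - 1 := by omega
  -- `m` is a unit in `W(A)`
  have hint : ¬ ((p : ℤ) ∣ (m : ℤ)) := by exact_mod_cast hpm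
  have hcast : ((m : ℤ) : ℤ_[p]) = (m : ℤ_[p]) := by push_cast; ring
  have hunit1 : IsUnit ((m : ℤ_[p])) := by
    rw [PadicInt.isUnit_iff]
    refine le_antisymm (PadicInt.norm_le_one _) ?_
    by_contra hlt
    push_neg at hlt
    refine hint ((PadicInt.norm_int_lt_one_iff_dvd _).mp ?_)
    rwa [hcast]
  let φ : ℤ_[p] →+* WittVector p A :=
    (WittVector.map (ZMod.castHom (dvd_refl p) A)).comp (WittVector.equiv p).symm.toRingHom
  have hunit : IsUnit ((m : WittVector p A)) := by
    have := hunit1.map φ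
    rwa [map_natCast] at this
  obtain ⟨u, hu⟩ := hunit
  set c : WittVector p A := ↑u⁻¹ * (p : WittVector p A) ^ e with hc
  refine ⟨(c • (Y ^ v)).map ⇑verschiebung, ?_, ?_, ?_⟩
  · -- v! • Z = X ^ v
    have hmu : (m : WittVector p A) * ↑u⁻¹ = 1 := by rw [← hu, Units.mul_inv]
    have key : (v.factorial : WittVector p A) * c = (p : WittVector p A) ^ (v - 1) := by
      calc (v.factorial : WittVector p A) * c
          = ((p ^ ν * m : ℕ) : WittVector p A) * (↑u⁻¹ * (p : WittVector p A) ^ e) := by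
            rw [hfac, hc]
        _ = (p : WittVector p A) ^ ν * (p : WittVector p A) ^ e
              * ((m : WittVector p A) * ↑u⁻¹) := by push_cast; ring
        _ = (p : WittVector p A) ^ (ν + e) := by rw [hmu, pow_add, mul_one]
        _ = (p : WittVector p A) ^ (v - 1) := by rw [he]
    have hcastp : ((p : WittVector p A)) ^ (v - 1) = ((p ^ (v - 1) : ℕ) : WittVector p A) := by
      push_cast; ring
    calc v.factorial • ((c • (Y ^ v)).map ⇑verschiebung)
        = ((v.factorial • (c • (Y ^ v))).map ⇑verschiebung) := (mapV_nsmul _ _).symm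
      _ = (((p ^ (v - 1) : ℕ) • (Y ^ v)).map ⇑verschiebung) := by
          rw [← Nat.cast_smul_eq_nsmul (WittVector p A) v.factorial, smul_smul, key,
            hcastp, Nat.cast_smul_eq_nsmul]
      _ = (p ^ (v - 1) : ℕ) • ((Y ^ v).map ⇑verschiebung) := mapV_nsmul _ _
      _ = (Y.map ⇑verschiebung) ^ v := (mapV_pow _ _ hv).symm
      _ = X ^ v := by rw [← hXY]
  · -- zeroth coordinate vanishes
    refine Matrix.ext fun i j => ?_
    simp [wittPi, Matrix.map_apply]
  · -- first coordinate is t-step nilpotent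
    have h1 : wittPi p 1 ((c • (Y ^ v)).map ⇑verschiebung) = wittPi p 0 (c • (Y ^ v)) := by
      refine Matrix.ext fun i j => ?_
      simp only [wittPi, Matrix.map_apply]
      exact WittVector.verschiebung_coeff_succ _ 0
    have h2 : wittPi p 0 (c • (Y ^ v)) = c.coeff 0 • wittPi p 0 (Y ^ v) := by
      refine Matrix.ext fun i j => ?_
      simp only [wittPi, Matrix.map_apply, Matrix.smul_apply, smul_eq_mul]
      exact WittVector.mul_coeff_zero _ _
    have hh : ∀ M : Matrix (Fin n) (Fin n) (WittVector p A),
        wittPi p 0 M = (WittVector.constantCoeff (p := p) (R := A)).mapMatrix M :=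
      fun M => rfl
    have h3 : wittPi p 0 (Y ^ v) = (wittPi p 1 X) ^ v := by
      have hY0 : wittPi p 0 Y = wittPi p 1 X := by
        refine Matrix.ext fun i j => ?_
        simp [wittPi, Matrix.map_apply, hYdef, WittVector.shift_coeff]
      rw [hh, map_pow, ← hh, hY0]
    rw [h1, h2, h3, smul_pow, ← pow_mul, mul_comm v t, pow_mul, hX1,
      zero_pow (show v ≠ 0 by omega), smul_zero]
end

section
/- Let p be an odd prime, A a reduced commutative ring with p·1_A = 0, n ≥ 1, s an integer with 1 ≤ s ≤ (p−1)/2, and let X ∈ Σ_s ⊆ M_n(W(A)). Then for every integer v ≥ 1 there exists a (necessarily unique, by torsion-freeness of W(A)) matrix Z ∈ M_n(W(A)) such that v!·Z = X^v and Z ∈ Σ_s. -/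
open WittVector

section aux
variable {p : ℕ} [hp : Fact p.Prime] {A : Type*} [CommRing A] [CharP A p]

local notation "𝕎" => WittVector p

lemma aux_exists_versch (x : 𝕎 A) (hx : x.coeff 0 = 0) :
    ∃ y : 𝕎 A, verschiebung y = x := by
  refine ⟨WittVector.mk p (fun n => x.coeff (n + 1)), ?_⟩
  ext m
  cases m with
  | zero => rw [verschiebung_coeff_zero, hx]
  | succ m => rw [verschiebung_coeff_succ, coeff_mk]

lemma aux_mul_versch (x y : 𝕎 A) (hx : x.coeff 0 = 0) (hy : y.coeff 0 = 0) :
    ∃ z : 𝕎 A, z.coeff 0 = 0 ∧ x * y = (p : 𝕎 A) * z := by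
  obtain ⟨a, rfl⟩ := aux_exists_versch x hx
  obtain ⟨b, rfl⟩ := aux_exists_versch y hy
  refine ⟨verschiebung (a * b), verschiebung_coeff_zero _, ?_⟩
  have h1 : verschiebung (a * frobenius (verschiebung b)) =
      verschiebung a * verschiebung b := verschiebung_mul_frobenius a (verschiebung b)
  rw [frobenius_verschiebung] at h1
  have h2 : a * (b * (p : 𝕎 A)) = p • (a * b) := by
    rw [nsmul_eq_mul]; ring
  rw [← h1, h2, map_nsmul, nsmul_eq_mul]

lemma aux_p_zero [IsReduced A] (x : 𝕎 A) (h : (p : 𝕎 A) * x = 0) : x = 0 := by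
  have hv : verschiebung (frobenius x) = 0 := by
    rw [verschiebung_frobenius, mul_comm, h]
  ext m
  have h1 : (verschiebung (frobenius x)).coeff (m + 1) = 0 := by rw [hv]; simp
  rw [verschiebung_coeff_succ, coeff_frobenius_charP] at h1
  have : IsNilpotent (x.coeff m) := ⟨p, h1⟩
  rw [this.eq_zero]
  simp

lemma aux_p_cancel [IsReduced A] (x y : 𝕎 A) (h : (p : 𝕎 A) * x = (p : 𝕎 A) * y) :
    x = y := by
  have h0 : (p : 𝕎 A) * (x - y) = 0 := by rw [mul_sub, h, sub_self]
  have := aux_p_zero _ h0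
  rwa [sub_eq_zero] at this

lemma aux_ppow_cancel [IsReduced A] (k : ℕ) (x y : 𝕎 A)
    (h : (p : 𝕎 A) ^ k * x = (p : 𝕎 A) ^ k * y) : x = y := by
  induction k with
  | zero => simpa using h
  | succ k ih =>
    apply ih
    apply aux_p_cancel
    rw [pow_succ'] at h
    rw [mul_assoc, mul_assoc] at h
    exact h

lemma aux_isUnit_natCast (u : ℕ) (hu : ¬ p ∣ u) : IsUnit (u : 𝕎 A) := by
  have h1 : IsUnit (u : ℤ_[p]) := by
    rw [PadicInt.isUnit_iff]
    refine le_antisymm (PadicInt.norm_le_one _) (not_lt.1 ?_)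
    intro hlt
    apply hu
    have : ‖((u : ℤ) : ℤ_[p])‖ < 1 := by push_cast; exact hlt
    rw [PadicInt.norm_int_lt_one_iff_dvd] at this
    exact_mod_cast this
  have h2 : IsUnit (u : 𝕎 (ZMod p)) := by
    have := h1.map (WittVector.equiv p).symm.toRingHom
    rwa [map_natCast] at this
  have := h2.map (WittVector.map (ZMod.castHom (dvd_refl p) A))
  rwa [map_natCast] at this

end aux

/-- `Σ_s`: matrices of Witt vectors whose `0`-th Witt coordinate matrix is `s`-step nilpotent. -/
def SigmaS (p : ℕ) {A : Type*} [CommRing A] {n : ℕ} (s : ℕ) :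
    Set (Matrix (Fin n) (Fin n) (WittVector p A)) :=
  {X | wittPi p 0 X ^ s = 0}

section matrixaux

variable {p : ℕ} [hp : Fact p.Prime] {A : Type*} [CommRing A] [CharP A p] {n : ℕ}

local notation "𝕎" => WittVector p

lemma wittPi_zero_eq (M : Matrix (Fin n) (Fin n) (𝕎 A)) :
    wittPi p 0 M = (WittVector.constantCoeff : 𝕎 A →+* A).mapMatrix M := by
  ext i j
  simp [wittPi, RingHom.mapMatrix_apply, Matrix.map_apply]

lemma wittPi_zero_pow (M : Matrix (Fin n) (Fin n) (𝕎 A)) (k : ℕ) :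
    wittPi p 0 (M ^ k) = (wittPi p 0 M) ^ k := by
  rw [wittPi_zero_eq, wittPi_zero_eq, map_pow]

lemma wittPi_zero_smul (c : 𝕎 A) (M : Matrix (Fin n) (Fin n) (𝕎 A)) :
    wittPi p 0 (c • M) = (WittVector.constantCoeff c) • wittPi p 0 M := by
  refine Matrix.ext fun i j => ?_
  simp [wittPi, Matrix.map_apply, WittVector.mul_coeff_zero]

/-- Divided powers divisibility at matrix level. -/
lemma aux_matrix_pow (Y : Matrix (Fin n) (Fin n) (𝕎 A))
    (hY : ∀ i j, (Y i j).coeff 0 = 0) (k : ℕ) :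
    ∃ T : Matrix (Fin n) (Fin n) (𝕎 A),
      (∀ i j, (T i j).coeff 0 = 0) ∧ Y ^ (k + 1) = ((p : 𝕎 A) ^ k) • T := by
  induction k with
  | zero => exact ⟨Y, hY, by simp⟩
  | succ k ih =>
    obtain ⟨T, hT, hTe⟩ := ih
    have key : ∀ i j, ∃ z : 𝕎 A, z.coeff 0 = 0 ∧ (T * Y) i j = (p : 𝕎 A) * z := by
      intro i j
      choose z hz0 hze using fun l => aux_mul_versch (T i l) (Y l j) (hT i l) (hY l j)
      refine ⟨∑ l, z l, ?_, ?_⟩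
      · rw [← WittVector.constantCoeff_apply, map_sum]
        refine Finset.sum_eq_zero fun l _ => ?_
        rw [WittVector.constantCoeff_apply]
        exact hz0 l
      · rw [Matrix.mul_apply, Finset.mul_sum]
        exact Finset.sum_congr rfl fun l _ => hze l
    choose T' hT'0 hT'e using fun i => key i
    refine ⟨Matrix.of (fun i j => T' i j), fun i j => hT'0 i j, ?_⟩
    have hTY : T * Y = (p : 𝕎 A) • Matrix.of (fun i j => T' i j) := by
      refine Matrix.ext fun i j => ?_
      rw [Matrix.smul_apply, smul_eq_mul]
      exact hT'e i j
    calc Y ^ (k + 1 + 1) = Y ^ (k + 1) * Y := by rw [pow_succ]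
      _ = ((p : 𝕎 A) ^ k • T) * Y := by rw [hTe]
      _ = (p : 𝕎 A) ^ k • (T * Y) := by rw [Matrix.smul_mul]
      _ = (p : 𝕎 A) ^ (k + 1) • Matrix.of (fun i j => T' i j) := by
          rw [hTY, smul_smul, ← pow_succ]

lemma aux_matrix_ppow_cancel [IsReduced A] (k : ℕ)
    (M N : Matrix (Fin n) (Fin n) (𝕎 A))
    (h : ((p : 𝕎 A) ^ k) • M = ((p : 𝕎 A) ^ k) • N) : M = N := by
  refine Matrix.ext fun i j => ?_
  apply aux_ppow_cancel k
  have := congrArg (fun Q => Q i j) h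
  simpa [Matrix.smul_apply, smul_eq_mul] using this

end matrixaux

/-- For `p` odd, `1 ≤ s ≤ (p-1)/2`, `X ∈ Σ_s` and `v ≥ 1`, the matrix `X^v / v!` exists in
`M_n(W(A))` and belongs to `Σ_s`. -/
theorem div_factorial_pow_mem_sigmaS (p : ℕ) [Fact p.Prime] (hp : Odd p) (A : Type*)
    [CommRing A] [CharP A p] [IsReduced A] (n s : ℕ) (hn : 1 ≤ n)
    (hs1 : 1 ≤ s) (hs2 : s ≤ (p - 1) / 2)
    (X : Matrix (Fin n) (Fin n) (WittVector p A)) (hX : X ∈ SigmaS p s)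
    (v : ℕ) (hv : 1 ≤ v) :
    ∃ Z : Matrix (Fin n) (Fin n) (WittVector p A),
      v.factorial • Z = X ^ v ∧ Z ∈ SigmaS p s := by
  have hppr : p.Prime := Fact.out
  set e : ℕ := (v.factorial).factorization p with he
  set u : ℕ := v.factorial / p ^ e with hudef
  have hfac_ne : v.factorial ≠ 0 := Nat.factorial_ne_zero v
  have huv : p ^ e * u = v.factorial := Nat.ordProj_mul_ordCompl_eq_self v.factorial p
  have hu : ¬ p ∣ u := Nat.not_dvd_ordCompl hppr hfac_ne
  obtain ⟨U, hUe⟩ := aux_isUnit_natCast (p := p) (A := A) u hu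
  have hπX : wittPi p 0 X ^ s = 0 := hX
  -- common fact: powers of X have nilpotent pi_0
  have hXv0 : wittPi p 0 (X ^ v) ^ s = 0 := by
    rw [wittPi_zero_pow, ← pow_mul, mul_comm, pow_mul, hπX, zero_pow (by omega)]
  rcases Nat.eq_zero_or_pos e with he0 | hepos
  · -- v! is coprime to p, hence a unit
    have hvu : (v.factorial : WittVector p A) = (u : WittVector p A) := by
      rw [← huv, he0, pow_zero, one_mul]
    refine ⟨(↑U⁻¹ : WittVector p A) • X ^ v, ?_, ?_⟩
    · rw [← Nat.cast_smul_eq_nsmul (WittVector p A), hvu, smul_smul, ← hUe,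
        Units.mul_inv, one_smul]
    · show wittPi p 0 _ ^ s = 0
      rw [wittPi_zero_smul, smul_pow, hXv0, smul_zero]
  · -- e ≥ 1
    have hple : p ≤ v := by
      have : p ∣ v.factorial := dvd_trans (dvd_pow_self p (by omega)) (Nat.ordProj_dvd _ _)
      exact (Nat.Prime.dvd_factorial hppr).1 this
    have hleg : (p - 1) * e ≤ v := by
      have h := sub_one_mul_padicValNat_factorial (p := p) v
      rw [he, Nat.factorization_def _ hppr, h]
      exact Nat.sub_le _ _
    have h2s : 2 * s ≤ p - 1 := by
      have := Nat.div_mul_le_self (p - 1) 2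
      omega
    have hp3 : 3 ≤ p := by
      rcases hp with ⟨m, hm⟩
      have := hppr.two_le
      omega
    have hA : 2 * (e * s) ≤ v := by
      calc 2 * (e * s) = e * (2 * s) := by ring
        _ ≤ e * (p - 1) := Nat.mul_le_mul_left e h2s
        _ = (p - 1) * e := Nat.mul_comm _ _
        _ ≤ v := hleg
    have hB : 1 * 1 ≤ e * s := Nat.mul_le_mul hepos hs1
    have hes : e * s + 1 ≤ v := by omega
    have hes2 : (e + 1) * s ≤ v := by
      have hsplit : (e + 1) * s = e * s + s := by ring
      omega
    -- entries of Y = X^s have vanishing 0-coefficient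
    set Y : Matrix (Fin n) (Fin n) (WittVector p A) := X ^ s with hYdef
    have hY0 : ∀ i j, (Y i j).coeff 0 = 0 := by
      intro i j
      have : wittPi p 0 Y = 0 := by rw [hYdef, wittPi_zero_pow]; exact hπX
      have := congrArg (fun Q => Q i j) this
      simpa [wittPi, Matrix.map_apply] using this
    obtain ⟨T, hT0, hTe⟩ := aux_matrix_pow Y hY0 e
    obtain ⟨T₂, hT₂0, hT₂e⟩ := aux_matrix_pow Y hY0 (v - 1)
    have hvsub : v - 1 + 1 = v := by omega
    rw [hvsub] at hT₂e
    set r : ℕ := v - (e + 1) * s with hrdef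
    set Z' : Matrix (Fin n) (Fin n) (WittVector p A) := T * X ^ r with hZ'def
    have hkey : ((p : WittVector p A) ^ e) • Z' = X ^ v := by
      rw [hZ'def, ← Matrix.smul_mul, ← hTe, hYdef, ← pow_mul, ← pow_add]
      congr 1
      have h1 : s * (e + 1) = e * s + s := by ring
      have h2 : (e + 1) * s = e * s + s := by ring
      omega
    refine ⟨(↑U⁻¹ : WittVector p A) • Z', ?_, ?_⟩
    · rw [← Nat.cast_smul_eq_nsmul (WittVector p A), ← huv]
      push_cast
      rw [smul_smul, mul_assoc, ← hUe, Units.mul_inv, mul_one, hkey]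
    · show wittPi p 0 _ ^ s = 0
      rw [wittPi_zero_smul, smul_pow]
      have hZ's : wittPi p 0 Z' ^ s = 0 := by
        rw [← wittPi_zero_pow]
        -- p^(e*s) • Z'^s = Y^v = p^(v-1) • T₂
        have hcan : Z' ^ s = ((p : WittVector p A) ^ (v - 1 - e * s)) • T₂ := by
          apply aux_matrix_ppow_cancel (e * s)
          rw [smul_smul, ← pow_add]
          have harith : e * s + (v - 1 - e * s) = v - 1 := by omega
          rw [harith, ← hT₂e]
          have : ((p : WittVector p A) ^ (e * s)) • Z' ^ s =
              (((p : WittVector p A) ^ e) • Z') ^ s := by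
            rw [smul_pow, ← pow_mul]
          rw [this, hkey, hYdef, ← pow_mul, ← pow_mul, mul_comm s v]
        rw [hcan]
        refine Matrix.ext fun i j => ?_
        simp only [Matrix.smul_apply, smul_eq_mul, wittPi, Matrix.map_apply,
          Matrix.zero_apply]
        rw [← WittVector.constantCoeff_apply, map_mul, map_pow,
          WittVector.constantCoeff_apply, WittVector.constantCoeff_apply, hT₂0, mul_zero]
      rw [hZ's, smul_zero]
end

section
/- Let p be an odd prime, A a reduced commutative ring with p·1_A = 0, n ≥ 1, s an integer with 1 ≤ s ≤ (p−1)/2, and X ∈ Σ_s ⊆ M_n(W(A)). Let d ≥ 0 and v ≥ 1 be integers with v ≥ (p−1)(d+1), and let Z ∈ M_n(W(A)) be the unique matrix with v!·Z = X^v. Then Z lies entrywise in V^{d+1}, i.e. coeff_j of every entry of Z vanishes for all j ≤ d. -/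
/-- A matrix of Witt vectors lies entrywise in `V^d` if the `j`-th Witt coordinates of all its
entries vanish for all `j < d`. -/
def EntrywiseV (p : ℕ) {A : Type*} [Zero A] {n : ℕ} (d : ℕ)
    (X : Matrix (Fin n) (Fin n) (WittVector p A)) : Prop :=
  ∀ j < d, wittPi p j X = 0

open WittVector
section Aux
variable (p : ℕ) [hp : Fact p.Prime] (A : Type*) [CommRing A]
lemma coeff_iterate_verschiebung_lt (k : ℕ) (y : WittVector p A) :
    ∀ j < k, (verschiebung^[k] y).coeff j = 0 := by
  induction k with
  | zero => intro j hj; omega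
  | succ k ih =>
    intro j hj
    rw [Function.iterate_succ_apply']
    cases j with
    | zero => exact verschiebung_coeff_zero _
    | succ j =>
      rw [verschiebung_coeff_succ]
      exact ih j (by omega)
/-- The ideal of Witt vectors lying in `V^k`. -/
def VIdeal (k : ℕ) : Ideal (WittVector p A) where
  carrier := {x | ∀ j < k, x.coeff j = 0}
  zero_mem' := fun j _ => WittVector.zero_coeff p A j
  add_mem' := by
    intro x y hx hy
    have hx' := WittVector.eq_iterate_verschiebung (n := k) hx
    have hy' := WittVector.eq_iterate_verschiebung (n := k) hy
    intro j hj
    rw [hx', hy', ← iterate_map_add verschiebung]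
    exact coeff_iterate_verschiebung_lt p A k _ j hj
  smul_mem' := by
    intro c x hx
    have hx' := WittVector.eq_iterate_verschiebung (n := k) hx
    intro j hj
    rw [smul_eq_mul, mul_comm, hx', iterate_verschiebung_mul_left]
    exact coeff_iterate_verschiebung_lt p A k _ j hj
lemma VIdeal_mono {a b : ℕ} (h : a ≤ b) : VIdeal p A b ≤ VIdeal p A a :=
  fun _x hx j hj => hx j (lt_of_lt_of_le hj h)
variable [CharP A p]
lemma mul_mem_VIdeal {a b : ℕ} {x y : WittVector p A}
    (hx : x ∈ VIdeal p A a) (hy : y ∈ VIdeal p A b) : x * y ∈ VIdeal p A (a + b) := by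
  have hx' := WittVector.eq_iterate_verschiebung (n := a) hx
  have hy' := WittVector.eq_iterate_verschiebung (n := b) hy
  intro j hj
  rw [hx', hy', iterate_verschiebung_mul]
  exact coeff_iterate_verschiebung_lt p A (a + b) _ j hj
lemma pPow_mul_mem_VIdeal (e : ℕ) (x : WittVector p A) :
    (p : WittVector p A) ^ e * x ∈ VIdeal p A e := by
  induction e with
  | zero => intro j hj; omega
  | succ e ih =>
    have hrw : (p : WittVector p A) ^ (e+1) * x = ((p : WittVector p A) ^ e * x) * p := by ring
    intro j hj
    rw [hrw]
    cases j with
    | zero => exact mul_charP_coeff_zero _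
    | succ j =>
      rw [mul_charP_coeff_succ]
      rw [ih j (by omega)]
      exact zero_pow hp.out.ne_zero
lemma coeff_pPow_mul (e j : ℕ) (x : WittVector p A) :
    ((p : WittVector p A) ^ e * x).coeff (j + e) = x.coeff j ^ p ^ e := by
  induction e with
  | zero => simp
  | succ e ih =>
    have hrw : (p : WittVector p A) ^ (e+1) * x = ((p : WittVector p A) ^ e * x) * p := by ring
    rw [hrw, show j + (e+1) = (j + e) + 1 from rfl, mul_charP_coeff_succ, ih, ← pow_mul,
      pow_succ]
end Aux

section MatrixAux
variable {p : ℕ} [hp : Fact p.Prime] {A : Type*} [CommRing A] [CharP A p] {n : ℕ}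

lemma matrix_mul_mem_VIdeal {a b : ℕ} {M N : Matrix (Fin n) (Fin n) (WittVector p A)}
    (hM : ∀ i j, M i j ∈ VIdeal p A a) (hN : ∀ i j, N i j ∈ VIdeal p A b) :
    ∀ i j, (M * N) i j ∈ VIdeal p A (a + b) := by
  intro i j
  rw [Matrix.mul_apply]
  exact Ideal.sum_mem _ fun k _ => mul_mem_VIdeal p A (hM i k) (hN k j)

lemma matrix_pow_mem_VIdeal {M : Matrix (Fin n) (Fin n) (WittVector p A)}
    (hM : ∀ i j, M i j ∈ VIdeal p A 1) (k : ℕ) :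
    ∀ i j, (M ^ k) i j ∈ VIdeal p A k := by
  induction k with
  | zero => intro i j j' hj'; omega
  | succ k ih =>
    intro i j
    rw [pow_succ]
    exact matrix_mul_mem_VIdeal ih hM i j

end MatrixAux

/-- If `p` is odd, `1 ≤ s ≤ (p-1)/2`, `X ∈ Σ_s` and `v ≥ (p-1)(d+1)` with `v ≥ 1`, then the
matrix `Z = X^v / v!` lies entrywise in `V^{d+1}`. -/
theorem div_factorial_pow_sigmaS_mem_verschiebung (p : ℕ) [Fact p.Prime] (hp : Odd p)
    (A : Type*) [CommRing A] [CharP A p] [IsReduced A] (n s : ℕ) (hn : 1 ≤ n)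
    (hs1 : 1 ≤ s) (hs2 : s ≤ (p - 1) / 2)
    (X : Matrix (Fin n) (Fin n) (WittVector p A)) (hX : X ∈ SigmaS p s)
    (d v : ℕ) (hv : 1 ≤ v) (hvd : (p - 1) * (d + 1) ≤ v)
    (Z : Matrix (Fin n) (Fin n) (WittVector p A)) (hZ : v.factorial • Z = X ^ v) :
    EntrywiseV p (d + 1) Z := by
  classical
  obtain ⟨m, hm⟩ := hp
  have hp2 : 2 ≤ p := (Fact.out : p.Prime).two_le
  have hm1 : 1 ≤ m := by omega
  -- the p-adic valuation of v!
  set e : ℕ := (v.factorial).factorization p with he_def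
  set M : ℕ := v.factorial / p ^ e with hM_def
  have hfac : p ^ e * M = v.factorial := Nat.ordProj_mul_ordCompl_eq_self _ p
  have hMnd : ¬ p ∣ M := Nat.not_dvd_ordCompl Fact.out v.factorial_ne_zero
  -- the valuation bound
  have hebound : (p - 1) * e ≤ v := by
    have h := sub_one_mul_padicValNat_factorial (p := p) v
    rw [he_def, Nat.factorization_def _ Fact.out]
    omega
  set q : ℕ := v / s with hq_def
  -- arithmetic: e + (d + 1) ≤ q
  have harith : e + (d + 1) ≤ q := by
    have hpm : p - 1 = 2 * m := by omega
    have hs2' : s ≤ m := by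
      rw [hpm] at hs2
      simpa using hs2
    have h3 : v / m ≤ q := Nat.div_le_div_left hs2' hs1
    have hkey : (e + (d + 1)) * m ≤ v := by
      have h4 : e ≤ v / (2 * m) := by
        rw [Nat.le_div_iff_mul_le (by omega)]
        calc e * (2 * m) = (2 * m) * e := by ring
          _ ≤ v := by rw [← hpm]; exact hebound
      have h5 : e * m ≤ v / 2 := by
        calc e * m ≤ (v / (2 * m)) * m := Nat.mul_le_mul_right m h4
          _ = (v / 2 / m) * m := by rw [Nat.div_div_eq_div_mul]
          _ ≤ v / 2 := Nat.div_mul_le_self _ m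
      have h6 : (d + 1) * m ≤ v / 2 := by
        rw [Nat.le_div_iff_mul_le (by omega)]
        calc (d + 1) * m * 2 = (2 * m) * (d + 1) := by ring
          _ ≤ v := by rw [← hpm]; exact hvd
      have h7 : v / 2 + v / 2 ≤ v := by omega
      calc (e + (d + 1)) * m = e * m + (d + 1) * m := by ring
        _ ≤ v / 2 + v / 2 := Nat.add_le_add h5 h6
        _ ≤ v := h7
    calc e + (d + 1) ≤ v / m := (Nat.le_div_iff_mul_le (by omega)).mpr hkey
      _ ≤ q := h3
  -- entries of X ^ s lie in V
  have hXs : ∀ i j, (X ^ s) i j ∈ VIdeal p A 1 := by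
    have h0 : wittPi p 0 (X ^ s) = 0 := by
      have : ∀ Y : Matrix (Fin n) (Fin n) (WittVector p A),
          wittPi p 0 Y = WittVector.constantCoeff.mapMatrix Y := fun Y => rfl
      rw [this, map_pow, ← this, hX]
    intro i j j' hj'
    interval_cases j'
    have := congr_fun (congr_fun h0 i) j
    simpa [wittPi] using this
  -- entries of X ^ v lie in V^q
  have hXv : ∀ i j, (X ^ v) i j ∈ VIdeal p A q := by
    have hsplit : X ^ v = (X ^ s) ^ q * X ^ (v % s) := by
      rw [← pow_mul, ← pow_add]
      congr 1
      rw [hq_def]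
      exact (Nat.div_add_mod v s).symm
    intro i j
    rw [hsplit]
    have h1 := matrix_pow_mem_VIdeal hXs q
    have h2 : ∀ i j, (X ^ (v % s)) i j ∈ VIdeal p A 0 := fun i j j' hj' => by omega
    have := matrix_mul_mem_VIdeal h1 h2 i j
    simpa using this
  -- Bezout
  have hcop : Nat.Coprime M (p ^ (d + 1)) :=
    Nat.Coprime.pow_right _ (((Nat.Prime.coprime_iff_not_dvd Fact.out).mpr hMnd).symm)
  have hcopZ : IsCoprime (M : ℤ) ((p : ℤ) ^ (d + 1)) := by
    have := Nat.isCoprime_iff_coprime.mpr hcop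
    push_cast at this
    exact this
  obtain ⟨a, b, hab⟩ := hcopZ
  -- now the entrywise conclusion
  intro j' hj'
  ext i k
  simp only [wittPi, Matrix.map_apply, Matrix.zero_apply]
  set z : WittVector p A := Z i k with hz_def
  have hw : (v.factorial : WittVector p A) * z = (X ^ v) i k := by
    have := congr_fun (congr_fun hZ i) k
    rw [Matrix.smul_apply] at this
    rw [← this, nsmul_eq_mul]
  have hone : (a : WittVector p A) * (M : WittVector p A)
      + (b : WittVector p A) * (p : WittVector p A) ^ (d + 1) = 1 := by
    have := congrArg (fun t : ℤ => (t : WittVector p A)) hab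
    push_cast at this
    simpa using this
  have hfacW : ((v.factorial : ℕ) : WittVector p A)
      = (p : WittVector p A) ^ e * (M : WittVector p A) := by
    have := congrArg (fun t : ℕ => (t : WittVector p A)) hfac.symm
    push_cast at this
    simpa using this
  have hdecomp : (p : WittVector p A) ^ e * z
      = (a : WittVector p A) * ((v.factorial : WittVector p A) * z)
        + (b : WittVector p A) * ((p : WittVector p A) ^ ((d + 1) + e) * z) := by
    rw [hfacW]
    rw [pow_add]
    linear_combination (-((p : WittVector p A) ^ e * z)) * hone
  have hkeymem : (p : WittVector p A) ^ e * z ∈ VIdeal p A (e + (d + 1)) := by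
    rw [hdecomp]
    apply add_mem
    · apply Ideal.mul_mem_left
      rw [hw]
      exact VIdeal_mono p A harith (hXv i k)
    · apply Ideal.mul_mem_left
      have := pPow_mul_mem_VIdeal p A ((d + 1) + e) z
      exact VIdeal_mono p A (by omega) this
  have hcoeff : z.coeff j' ^ p ^ e = 0 := by
    rw [← coeff_pPow_mul p A e j' z]
    exact hkeymem (j' + e) (by omega)
  exact IsNilpotent.eq_zero ⟨p ^ e, hcoeff⟩
end

section
/- Let p be a prime, A a reduced commutative ring with p·1_A = 0, n ≥ 1, and let Σ denote either Σ_s (with p odd and 1 ≤ s ≤ (p−1)/2) or Σ_{1,t} (with t ≥ 1). Let X ∈ Σ. Then for every N ≥ 1 the N-th exponential partial sum E_N(X) exists and lies in Σ, and the sequence (E_N(X))_{N≥1} converges V-adically to a matrix e₁(X) which lies in Σ; moreover this V-adic limit is unique. -/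
/-- The predicate "`S` is either `Σ_s` (with `p` odd and `1 ≤ s ≤ (p-1)/2`) or `Σ_{1,t}`
(with `t ≥ 1`)". -/
def IsSigmaEither (p : ℕ) {A : Type*} [CommRing A] {n : ℕ}
    (S : Set (Matrix (Fin n) (Fin n) (WittVector p A))) : Prop :=
  (∃ s : ℕ, Odd p ∧ 1 ≤ s ∧ s ≤ (p - 1) / 2 ∧ S = SigmaS p s) ∨
  (∃ t : ℕ, 1 ≤ t ∧ S = SigmaOneT p t)

/-- V-adic convergence of a sequence of matrices of Witt vectors. -/
def TendstoV (p : ℕ) [Fact p.Prime] {A : Type*} [CommRing A] {n : ℕ}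
    (Y : ℕ → Matrix (Fin n) (Fin n) (WittVector p A))
    (L : Matrix (Fin n) (Fin n) (WittVector p A)) : Prop :=
  ∀ d : ℕ, ∃ N₀ : ℕ, ∀ N ≥ N₀, EntrywiseV p d (Y N - L)

/-- `E` is the sequence of exponential partial sums of `X`:
`N! • E N = ∑_{v=1}^{N} (N!/v!) • X^v` for all `N ≥ 1`. -/
def IsExpPartialSums (p : ℕ) [Fact p.Prime] {A : Type*} [CommRing A] {n : ℕ}
    (X : Matrix (Fin n) (Fin n) (WittVector p A))
    (E : ℕ → Matrix (Fin n) (Fin n) (WittVector p A)) : Prop :=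
  ∀ N, 1 ≤ N → N.factorial • E N =
    ∑ v ∈ Finset.Icc 1 N, (N.factorial / v.factorial) • X ^ v

/-- `Lg` is the sequence of logarithmic partial sums of `X`:
`N! • Lg N = ∑_{v=1}^{N} (-1)^(v-1) • (N!/v) • X^v` for all `N ≥ 1`. -/
def IsLogPartialSums (p : ℕ) [Fact p.Prime] {A : Type*} [CommRing A] {n : ℕ}
    (X : Matrix (Fin n) (Fin n) (WittVector p A))
    (Lg : ℕ → Matrix (Fin n) (Fin n) (WittVector p A)) : Prop :=
  ∀ N, 1 ≤ N → (N.factorial : ℤ) • Lg N =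
    ∑ v ∈ Finset.Icc 1 N, ((-1 : ℤ) ^ (v - 1) * ((N.factorial / v : ℕ) : ℤ)) • X ^ v

/-- `L` is the V-adic limit of the exponential partial sums of `X`. -/
def IsExpLimit (p : ℕ) [Fact p.Prime] {A : Type*} [CommRing A] {n : ℕ}
    (X L : Matrix (Fin n) (Fin n) (WittVector p A)) : Prop :=
  ∃ E : ℕ → Matrix (Fin n) (Fin n) (WittVector p A),
    IsExpPartialSums p X E ∧ TendstoV p E L

/-- `L` is the V-adic limit of the logarithmic partial sums of `X`. -/
def IsLogLimit (p : ℕ) [Fact p.Prime] {A : Type*} [CommRing A] {n : ℕ}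
    (X L : Matrix (Fin n) (Fin n) (WittVector p A)) : Prop :=
  ∃ Lg : ℕ → Matrix (Fin n) (Fin n) (WittVector p A),
    IsLogPartialSums p X Lg ∧ TendstoV p Lg L

namespace ExpAux

open WittVector Finset

set_option linter.unusedSectionVars false
variable {p : ℕ} [hp : Fact p.Prime] {A : Type*} [CommRing A] [CharP A p] {n : ℕ}

local notation "𝕎" => WittVector p A
local notation "MW" => Matrix (Fin n) (Fin n) (WittVector p A)

/-! ### scalar Witt vector lemmas -/

noncomputable def shiftW (x : 𝕎) : 𝕎 := WittVector.mk p fun i => x.coeff (i + 1)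

theorem verschiebung_shiftW {x : 𝕎} (hx : x.coeff 0 = 0) :
    verschiebung (shiftW x) = x := by
  apply WittVector.ext
  rintro (_ | j)
  · rw [verschiebung_coeff_zero, hx]
  · rw [verschiebung_coeff_succ, shiftW, coeff_mk]

theorem versch_mul_p (x : 𝕎) : verschiebung (x * (p : 𝕎)) = verschiebung x * (p : 𝕎) := by
  calc verschiebung (x * (p : 𝕎))
      = verschiebung (frobenius (verschiebung x)) := by rw [frobenius_verschiebung]
    _ = verschiebung x * p := verschiebung_frobenius _

theorem versch_mul_versch (x y : 𝕎) :
    verschiebung x * verschiebung y = verschiebung (x * y) * (p : 𝕎) := by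
  have h := iterate_verschiebung_mul_left (p := p) x (verschiebung y) 1
  simp only [Function.iterate_one] at h
  rw [h, frobenius_verschiebung, ← mul_assoc, versch_mul_p]

theorem mul_versch (c z : 𝕎) : c * verschiebung z = verschiebung (z * frobenius c) := by
  rw [verschiebung_mul_frobenius, mul_comm]

theorem coeff_one_add {x y : 𝕎} (hx : x.coeff 0 = 0) (hy : y.coeff 0 = 0) :
    (x + y).coeff 1 = x.coeff 1 + y.coeff 1 := by
  rw [← verschiebung_shiftW hx, ← verschiebung_shiftW hy, ← map_add]
  show (verschiebung _).coeff (Nat.succ 0) = (verschiebung _).coeff (Nat.succ 0) + (verschiebung _).coeff (Nat.succ 0)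
  rw [verschiebung_coeff_succ, verschiebung_coeff_succ, verschiebung_coeff_succ, add_coeff_zero]


/-! ### EntrywiseV lemmas -/

theorem wittPi_apply (j : ℕ) (X : MW) (a b : Fin n) :
    wittPi p j X a b = (X a b).coeff j := rfl

theorem entrywiseV_iff {d : ℕ} {X : MW} :
    EntrywiseV p d X ↔ ∀ a b : Fin n, ∀ j < d, (X a b).coeff j = 0 := by
  constructor
  · intro h a b j hj
    have h2 := congrFun (congrFun (h j hj) a) b
    simpa [wittPi, Matrix.map_apply] using h2
  · intro h j hj
    ext a b
    exact h a b j hj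

theorem entrywiseV_iff_trunc {d : ℕ} {X : MW} :
    EntrywiseV p d X ↔ ∀ a b : Fin n, WittVector.truncate d (X a b) = 0 := by
  rw [entrywiseV_iff]
  refine forall₂_congr fun a b => ?_
  rw [← RingHom.mem_ker, WittVector.mem_ker_truncate]

theorem entrywiseV_zero' (X : MW) : EntrywiseV p 0 X := fun j hj => absurd hj (Nat.not_lt_zero j)

theorem ev_mono {d d' : ℕ} {X : MW} (h : d' ≤ d) (hX : EntrywiseV p d X) :
    EntrywiseV p d' X := fun j hj => hX j (lt_of_lt_of_le hj h)

theorem ev_sum {d : ℕ} {ι : Type*} {t : Finset ι} {f : ι → MW}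
    (h : ∀ i ∈ t, EntrywiseV p d (f i)) : EntrywiseV p d (∑ i ∈ t, f i) := by
  rw [entrywiseV_iff_trunc]
  intro a b
  rw [Matrix.sum_apply, map_sum]
  exact Finset.sum_eq_zero fun i hi => entrywiseV_iff_trunc.mp (h i hi) a b

theorem ev_sub {d : ℕ} {X Y : MW} (hX : EntrywiseV p d X) (hY : EntrywiseV p d Y) :
    EntrywiseV p d (X - Y) := by
  rw [entrywiseV_iff_trunc] at *
  intro a b
  rw [Matrix.sub_apply, map_sub, hX a b, hY a b, sub_zero]

theorem ev_smul {d : ℕ} (c : 𝕎) {X : MW} (hX : EntrywiseV p d X) :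
    EntrywiseV p d (c • X) := by
  rw [entrywiseV_iff_trunc] at *
  intro a b
  rw [Matrix.smul_apply, smul_eq_mul, map_mul, hX a b, mul_zero]

theorem entrywiseV_sub_iff {d : ℕ} {X Y : MW} :
    EntrywiseV p d (X - Y) ↔ ∀ j < d, ∀ a b : Fin n, (X a b).coeff j = (Y a b).coeff j := by
  rw [entrywiseV_iff_trunc]
  constructor
  · intro h j hj a b
    have h2 := h a b
    rw [Matrix.sub_apply, map_sub, sub_eq_zero] at h2
    have := congrArg (fun z => TruncatedWittVector.coeff ⟨j, hj⟩ z) h2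
    simpa only [WittVector.coeff_truncate] using this
  · intro h a b
    rw [Matrix.sub_apply, map_sub, sub_eq_zero]
    apply TruncatedWittVector.ext
    intro i
    rw [WittVector.coeff_truncate, WittVector.coeff_truncate]
    exact h i i.2 a b

theorem ev_p_smul {d : ℕ} {X : MW} (h : EntrywiseV p d X) :
    EntrywiseV p (d + 1) ((p : 𝕎) • X) := by
  rw [entrywiseV_iff] at *
  intro a b j hj
  have he : ((p : 𝕎) • X) a b = X a b * (p : 𝕎) := by
    rw [Matrix.smul_apply, smul_eq_mul, mul_comm]
  rw [he]
  rcases j with _ | j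
  · exact mul_charP_coeff_zero _
  · rw [mul_charP_coeff_succ, h a b j (by omega), zero_pow hp.out.ne_zero]

theorem ev_p_pow_smul {d : ℕ} (k : ℕ) {X : MW} (h : EntrywiseV p d X) :
    EntrywiseV p (d + k) (((p : 𝕎) ^ k) • X) := by
  induction k with
  | zero => simpa using h
  | succ k ih =>
    have : ((p : 𝕎) ^ (k+1)) • X = (p : 𝕎) • (((p : 𝕎) ^ k) • X) := by
      rw [smul_smul, pow_succ, mul_comm]
    rw [this, show d + (k+1) = (d + k) + 1 by omega]
    exact ev_p_smul ih


/-! ### matrix-level Verschiebung -/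

noncomputable def Vm (Z : MW) : MW := Z.map (⇑(verschiebung (p := p) (R := A)))

noncomputable def shm (X : MW) : MW := X.map shiftW

theorem Vm_apply (Z : MW) (a b : Fin n) : Vm Z a b = verschiebung (Z a b) := rfl

theorem shm_apply (X : MW) (a b : Fin n) : shm X a b = shiftW (X a b) := rfl

theorem eq_Vm_shm {X : MW} (h : wittPi p 0 X = 0) : X = Vm (shm X) := by
  ext a b
  rw [Vm_apply, shm_apply, verschiebung_shiftW]
  have := congrFun (congrFun h a) b
  simpa [wittPi, Matrix.map_apply] using this

theorem Vm_add (Z Z' : MW) : Vm (Z + Z') = Vm Z + Vm Z' := by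
  ext a b
  simp only [Vm_apply, Matrix.add_apply, map_add]

theorem wittPi_Vm_zero (Z : MW) : wittPi p 0 (Vm Z) = 0 := by
  ext a b
  simp [wittPi, Matrix.map_apply, Vm_apply, verschiebung_coeff_zero]

theorem wittPi_Vm_succ (Z : MW) (j : ℕ) : wittPi p (j + 1) (Vm Z) = wittPi p j Z := by
  ext a b
  show (verschiebung (Z a b)).coeff (j + 1) = (Z a b).coeff j
  exact verschiebung_coeff_succ _ _

theorem wittPi_Vm_one (Z : MW) : wittPi p 1 (Vm Z) = wittPi p 0 Z :=
  wittPi_Vm_succ Z 0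

theorem wittPi_shm (X : MW) (j : ℕ) : wittPi p j (shm X) = wittPi p (j + 1) X := by
  ext a b
  show (shiftW (X a b)).coeff j = (X a b).coeff (j + 1)
  rw [shiftW, coeff_mk]

theorem ev_Vm {d : ℕ} {Z : MW} (h : EntrywiseV p d Z) : EntrywiseV p (d + 1) (Vm Z) := by
  intro j hj
  rcases j with _ | j
  · exact wittPi_Vm_zero Z
  · rw [wittPi_Vm_succ]
    exact h j (by omega)

theorem ev_one_iff {X : MW} : EntrywiseV p 1 X ↔ wittPi p 0 X = 0 := by
  constructor
  · intro h; exact h 0 one_pos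
  · intro h j hj
    have : j = 0 := by omega
    subst this; exact h

theorem Vm_mul (Z Z' : MW) : Vm Z * Vm Z' = (p : 𝕎) • Vm (Z * Z') := by
  apply Matrix.ext
  intro a b
  rw [Matrix.smul_apply, smul_eq_mul, mul_comm ((p : 𝕎)) _, Matrix.mul_apply]
  have h2 : Vm (Z * Z') a b = verschiebung (∑ k, Z a k * Z' k b) := by
    rw [Vm_apply, Matrix.mul_apply]
  have h3 : verschiebung (∑ k, Z a k * Z' k b) = ∑ k, verschiebung (Z a k * Z' k b) := by
    rw [map_sum (verschiebung : WittVector p A →+ WittVector p A) _ Finset.univ]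
  rw [h2, h3, Finset.sum_mul]
  refine Finset.sum_congr rfl fun k _ => ?_
  rw [Vm_apply, Vm_apply, versch_mul_versch]

theorem smul_Vm (c : 𝕎) (Z : MW) : c • Vm Z = Vm ((frobenius c) • Z) := by
  ext a b
  rw [Matrix.smul_apply, smul_eq_mul, Vm_apply, Vm_apply, Matrix.smul_apply, smul_eq_mul,
    mul_comm (frobenius c), mul_versch]

theorem versch_mul_p_pow (x : 𝕎) (k : ℕ) :
    verschiebung (x * (p : 𝕎) ^ k) = verschiebung x * (p : 𝕎) ^ k := by
  induction k with
  | zero => simp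
  | succ k ih => rw [pow_succ, ← mul_assoc, versch_mul_p, ih, mul_assoc]

theorem Vm_p_pow_smul (k : ℕ) (Z : MW) :
    Vm (((p : 𝕎) ^ k) • Z) = ((p : 𝕎) ^ k) • Vm Z := by
  ext a b
  rw [Vm_apply, Matrix.smul_apply, Matrix.smul_apply, smul_eq_mul, smul_eq_mul,
    mul_comm ((p : 𝕎) ^ k) (Z a b), versch_mul_p_pow, Vm_apply,
    mul_comm ((p : 𝕎) ^ k) _]

/-! ### wittPi algebra -/

theorem wittPi_zero_eq (X : MW) :
    wittPi p 0 X = (WittVector.constantCoeff (p := p) (R := A)).mapMatrix X := by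
  ext a b
  simp [wittPi, Matrix.map_apply, RingHom.mapMatrix_apply]

theorem wittPi_zero_mul (X Y : MW) :
    wittPi p 0 (X * Y) = wittPi p 0 X * wittPi p 0 Y := by
  simp only [wittPi_zero_eq, map_mul]

theorem wittPi_zero_pow (X : MW) (k : ℕ) :
    wittPi p 0 (X ^ k) = wittPi p 0 X ^ k := by
  simp only [wittPi_zero_eq, map_pow]

theorem wittPi_zero_sub (X Y : MW) :
    wittPi p 0 (X - Y) = wittPi p 0 X - wittPi p 0 Y := by
  simp only [wittPi_zero_eq, map_sub]

theorem wittPi_zero_sum {ι : Type*} (t : Finset ι) (f : ι → MW) :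
    wittPi p 0 (∑ i ∈ t, f i) = ∑ i ∈ t, wittPi p 0 (f i) := by
  simp only [wittPi_zero_eq, map_sum]

theorem wittPi_zero_smul (c : 𝕎) (X : MW) :
    wittPi p 0 (c • X) = (c.coeff 0) • wittPi p 0 X := by
  ext a b
  show ((c • X) a b).coeff 0 = c.coeff 0 * (X a b).coeff 0
  rw [Matrix.smul_apply, smul_eq_mul, mul_coeff_zero]

theorem wittPi_one_add {X Y : MW} (hX : wittPi p 0 X = 0) (hY : wittPi p 0 Y = 0) :
    wittPi p 1 (X + Y) = wittPi p 1 X + wittPi p 1 Y := by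
  ext a b
  show ((X + Y) a b).coeff 1 = (X a b).coeff 1 + (Y a b).coeff 1
  rw [Matrix.add_apply]
  have hx0 : (X a b).coeff 0 = 0 := by
    have := congrFun (congrFun hX a) b; simpa [wittPi, Matrix.map_apply] using this
  have hy0 : (Y a b).coeff 0 = 0 := by
    have := congrFun (congrFun hY a) b; simpa [wittPi, Matrix.map_apply] using this
  exact coeff_one_add hx0 hy0

theorem wittPi_matrix_zero (j : ℕ) : wittPi p j (0 : MW) = 0 := by
  ext a b
  simp [wittPi, Matrix.map_apply]

theorem wittPi_one_sum {ι : Type*} {t : Finset ι} {f : ι → MW}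
    (h : ∀ i ∈ t, wittPi p 0 (f i) = 0) :
    wittPi p 1 (∑ i ∈ t, f i) = ∑ i ∈ t, wittPi p 1 (f i) := by
  classical
  induction t using Finset.cons_induction with
  | empty => simp [wittPi_matrix_zero]
  | cons i t hi ih =>
    rw [Finset.sum_cons, Finset.sum_cons,
      wittPi_one_add (h i (Finset.mem_cons_self i t)) ?_, ih fun j hj => h j (Finset.mem_cons_of_mem hj)]
    rw [wittPi_zero_sum]
    exact Finset.sum_eq_zero fun j hj => h j (Finset.mem_cons_of_mem hj)


/-! ### units and factorials -/

theorem isUnit_natCast_witt {u : ℕ} (hu : ¬ p ∣ u) : IsUnit ((u : 𝕎)) := by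
  have h1 : IsUnit ((u : ℕ) : ℤ_[p]) := by
    rw [PadicInt.isUnit_iff]
    have hle : ‖((u : ℕ) : ℤ_[p])‖ ≤ 1 := PadicInt.norm_le_one _
    rcases lt_or_eq_of_le hle with h | h
    · exfalso
      have : ((u : ℕ) : ℤ_[p]) = (((u : ℕ) : ℤ) : ℤ_[p]) := by push_cast; ring
      rw [this, PadicInt.norm_int_lt_one_iff_dvd] at h
      exact hu (Int.natCast_dvd_natCast.mp (by exact_mod_cast h))
    · exact h
  let ψ : ℤ_[p] →+* 𝕎 :=
    (WittVector.map (ZMod.castHom dvd_rfl A)).comp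
      ((WittVector.equiv p).symm : ℤ_[p] →+* WittVector p (ZMod p))
  have h2 : ((u : ℕ) : 𝕎) = ψ ((u : ℕ) : ℤ_[p]) := by
    rw [map_natCast]
  rw [h2]
  exact h1.map ψ

theorem factorial_decomp (v : ℕ) (hv : 1 ≤ v) :
    ∃ m u : ℕ, v.factorial = p ^ m * u ∧ ¬ p ∣ u ∧ (p - 1) * m ≤ v - 1 := by
  have hfne : v.factorial ≠ 0 := Nat.factorial_ne_zero v
  set m := padicValNat p v.factorial with hm
  have hdvd : p ^ m ∣ v.factorial := pow_padicValNat_dvd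
  refine ⟨m, v.factorial / p ^ m, (Nat.mul_div_cancel' hdvd).symm, ?_, ?_⟩
  · intro hdu
    have h2 : p ^ (m + 1) ∣ v.factorial := by
      obtain ⟨c, hc⟩ := hdu
      refine ⟨c, ?_⟩
      rw [pow_succ, mul_assoc, ← hc, Nat.mul_div_cancel' hdvd]
    exact pow_succ_padicValNat_not_dvd hfne h2
  · have hsum := sub_one_mul_padicValNat_factorial (p := p) v
    rw [← hm] at hsum
    have hds : 1 ≤ (p.digits v).sum := by
      have hne : p.digits v ≠ [] := Nat.digits_ne_nil_iff_ne_zero.mpr (by omega)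
      have hlast := Nat.getLast_digit_ne_zero p (show v ≠ 0 by omega)
      have hmem := List.getLast_mem hne
      have := List.single_le_sum (l := p.digits v) (fun x _ => Nat.zero_le x) _ hmem
      omega
    omega

theorem arith_sigmaS {k s v m : ℕ} (hk : 2 * s ≤ k) (hs : 1 ≤ s) (hv : s ≤ v)
    (hm : k * m ≤ v - 1) : m + 1 ≤ v / s ∧ v / k + m ≤ v / s := by
  have hk2 : 2 ≤ k := by omega
  have h1 : 1 ≤ v / s := (Nat.one_le_div_iff (by omega)).mpr hv
  have hmk : m ≤ (v - 1) / k := (Nat.le_div_iff_mul_le (by omega)).mpr (by rwa [Nat.mul_comm m k])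
  have h2v : 2 * v / k ≤ v / s := by
    calc 2 * v / k ≤ 2 * v / (2 * s) := Nat.div_le_div_left hk (by omega)
      _ = v / s := Nat.mul_div_mul_left v s (by omega)
  have hsup : v / k + (v - 1) / k ≤ (v + (v - 1)) / k := by
    rw [Nat.le_div_iff_mul_le (by omega : 0 < k), add_mul]
    exact Nat.add_le_add (Nat.div_mul_le_self v k) (Nat.div_mul_le_self (v - 1) k)
  have hchain : v / k + (v - 1) / k ≤ v / s := by
    calc v / k + (v - 1) / k ≤ (v + (v - 1)) / k := hsup
      _ ≤ 2 * v / k := Nat.div_le_div_right (by omega)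
      _ ≤ v / s := h2v
  constructor
  · rcases Nat.eq_zero_or_pos m with h | h
    · omega
    · have hkv : k ≤ v := by
        have : k * 1 ≤ k * m := Nat.mul_le_mul_left k h
        omega
      have hvk1 : 1 ≤ v / k := (Nat.one_le_div_iff (by omega)).mpr hkv
      omega
  · omega

/-! ### power factorization -/

theorem pow_eq_p_pow_smul {Y : MW} (hY : wittPi p 0 Y = 0) (q : ℕ) (hq : 1 ≤ q) :
    ∃ Z : MW, wittPi p 0 Z = 0 ∧ Y ^ q = ((p : 𝕎) ^ (q - 1)) • Z := by
  induction q, hq using Nat.le_induction with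
  | base => exact ⟨Y, hY, by simp⟩
  | succ q hq ih =>
    obtain ⟨Z, hZ0, hZ⟩ := ih
    refine ⟨Vm (shm Z * shm Y), wittPi_Vm_zero _, ?_⟩
    have hmul : Z * Y = (p : 𝕎) • Vm (shm Z * shm Y) := by
      conv_lhs => rw [eq_Vm_shm hZ0, eq_Vm_shm hY]
      rw [Vm_mul]
    rw [pow_succ, hZ, smul_mul_assoc, hmul, smul_smul, ← pow_succ]
    congr 2
    omega


/-! ### per-term existence, case sigma_s -/

theorem exists_term_sigmaS {s : ℕ} (hs : 1 ≤ s) (h2s : 2 * s ≤ p - 1) {X : MW}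
    (hX : wittPi p 0 X ^ s = 0) (v : ℕ) (hv : 1 ≤ v) :
    ∃ e : MW, ((v.factorial : ℕ) : 𝕎) • e = X ^ v ∧ EntrywiseV p (v / (p - 1)) e ∧
      ∃ B, Commute (wittPi p 0 X) B ∧ wittPi p 0 e = wittPi p 0 X * B := by
  obtain ⟨m, u, hfc, hu, hm⟩ := factorial_decomp (p := p) v hv
  obtain ⟨U, hU⟩ := isUnit_natCast_witt (A := A) hu
  by_cases hvs : v < s
  · have hm0 : m = 0 := by
      by_contra h
      have hdvd : p ∣ v.factorial := by
        rw [hfc]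
        exact Dvd.dvd.mul_right (dvd_pow_self p h) u
      have hple := (Nat.Prime.dvd_factorial hp.out).mp hdvd
      have := hp.out.two_le
      omega
    refine ⟨(↑U⁻¹ : 𝕎) • X ^ v, ?_, ?_, ?_⟩
    · rw [smul_smul]
      have hone : ((v.factorial : ℕ) : 𝕎) * (↑U⁻¹ : 𝕎) = 1 := by
        have h2 : (v.factorial : ℕ) = u := by rw [hfc, hm0, pow_zero, one_mul]
        rw [h2, ← hU, Units.mul_inv]
      rw [hone, one_smul]
    · have h0 : v / (p - 1) = 0 := Nat.div_eq_of_lt (by omega)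
      rw [h0]
      exact entrywiseV_zero' _
    · refine ⟨((↑U⁻¹ : 𝕎).coeff 0) • wittPi p 0 X ^ (v - 1),
        ((Commute.refl (wittPi p 0 X)).pow_right (v - 1)).smul_right _, ?_⟩
      rw [wittPi_zero_smul, wittPi_zero_pow]
      have hpow : wittPi p 0 X ^ v = wittPi p 0 X * wittPi p 0 X ^ (v - 1) := by
        conv_lhs => rw [show v = 1 + (v - 1) by omega]
        rw [pow_add, pow_one]
      rw [hpow, mul_smul_comm]
  · push_neg at hvs
    have hq1 : 1 ≤ v / s := (Nat.one_le_div_iff (by omega)).mpr hvs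
    have hY0 : wittPi p 0 (X ^ s) = 0 := by rw [wittPi_zero_pow, hX]
    obtain ⟨Z, hZ0, hZ⟩ := pow_eq_p_pow_smul hY0 (v / s) hq1
    have harith := arith_sigmaS h2s hs hvs hm
    set q := v / s with hqdef
    have hXv : X ^ v = ((p : 𝕎) ^ (q - 1)) • (Z * X ^ (v % s)) := by
      have hsplit : v = s * q + v % s := (Nat.div_add_mod v s).symm
      conv_lhs => rw [hsplit]
      rw [pow_add, pow_mul, hZ, smul_mul_assoc]
    set G := Z * X ^ (v % s) with hGdef
    have hG0 : wittPi p 0 G = 0 := by rw [hGdef, wittPi_zero_mul, hZ0, zero_mul]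
    have hev : EntrywiseV p (1 + (q - 1 - m)) ((↑U⁻¹ : 𝕎) • (((p : 𝕎) ^ (q - 1 - m)) • G)) :=
      ev_smul _ (ev_p_pow_smul _ (ev_one_iff.mpr hG0))
    refine ⟨(↑U⁻¹ : 𝕎) • (((p : 𝕎) ^ (q - 1 - m)) • G), ?_, ?_, ?_⟩
    · rw [smul_smul, smul_smul]
      have hc : ((v.factorial : ℕ) : 𝕎) * (↑U⁻¹ : 𝕎) * (p : 𝕎) ^ (q - 1 - m)
          = (p : 𝕎) ^ (q - 1) := by
        have hcast : ((v.factorial : ℕ) : 𝕎) = (p : 𝕎) ^ m * ((u : ℕ) : 𝕎) := by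
          rw [hfc]; push_cast; ring
        calc ((v.factorial : ℕ) : 𝕎) * (↑U⁻¹ : 𝕎) * (p : 𝕎) ^ (q - 1 - m)
            = (p : 𝕎) ^ m * (p : 𝕎) ^ (q - 1 - m) * ((↑U : 𝕎) * (↑U⁻¹ : 𝕎)) := by
              rw [hcast, ← hU]; ring
          _ = (p : 𝕎) ^ (q - 1) := by
              rw [Units.mul_inv, mul_one, ← pow_add]
              congr 1
              omega
      rw [hc, hXv]
    · exact ev_mono (show v / (p - 1) ≤ 1 + (q - 1 - m) by omega) hev
    · refine ⟨0, Commute.zero_right _, ?_⟩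
      rw [mul_zero]
      exact ev_one_iff.mp (ev_mono (by omega) hev)

/-! ### per-term existence, case sigma_{1,t} -/

theorem pow_of_V {X : MW} (h0 : wittPi p 0 X = 0) (w : ℕ) (hw : 1 ≤ w) :
    X ^ w = ((p : 𝕎) ^ (w - 1)) • Vm ((shm X) ^ w) := by
  set Y := shm X with hYdef
  have hXe : X = Vm Y := eq_Vm_shm h0
  induction w, hw using Nat.le_induction with
  | base =>
    simp only [pow_one, Nat.sub_self, pow_zero, one_smul]
    exact hXe
  | succ w hw ih =>
    rw [pow_succ, ih, smul_mul_assoc, hXe, Vm_mul, ← pow_succ, smul_smul, ← pow_succ]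
    congr 2
    omega

theorem exists_term_sigma1t {t : ℕ} (ht : 1 ≤ t) {X : MW} (h0 : wittPi p 0 X = 0)
    (h1 : wittPi p 1 X ^ t = 0) (v : ℕ) (hv : 1 ≤ v) :
    ∃ e : MW, ((v.factorial : ℕ) : 𝕎) • e = X ^ v ∧ EntrywiseV p (v / t) e ∧
      wittPi p 0 e = 0 ∧
      ∃ B, Commute (wittPi p 1 X) B ∧ wittPi p 1 e = wittPi p 1 X * B := by
  obtain ⟨m, u, hfc, hu, hm⟩ := factorial_decomp (p := p) v hv
  obtain ⟨U, hU⟩ := isUnit_natCast_witt (A := A) hu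
  have hp2 := hp.out.two_le
  have hm1 : m ≤ v - 1 := by
    have : 1 * m ≤ (p - 1) * m := Nat.mul_le_mul_right m (by omega)
    omega
  have hX1 : wittPi p 0 (shm X) = wittPi p 1 X := wittPi_shm X 0
  -- common: a helper to build the term from an exponent and a matrix
  have key : ∀ (E : ℕ) (G : MW), X ^ v = ((p : 𝕎) ^ (E + m)) • Vm G →
      ((E = 0 → ∃ B, Commute (wittPi p 1 X) B ∧
        wittPi p 1 ((↑U⁻¹ : 𝕎) • (((p : 𝕎) ^ E) • Vm G)) = wittPi p 1 X * B)) →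
      ∃ e : MW, ((v.factorial : ℕ) : 𝕎) • e = X ^ v ∧ EntrywiseV p (1 + E) e ∧
      wittPi p 0 e = 0 ∧
      ∃ B, Commute (wittPi p 1 X) B ∧ wittPi p 1 e = wittPi p 1 X * B := by
    intro E G hXv hB0
    have hev : EntrywiseV p (1 + E) ((↑U⁻¹ : 𝕎) • (((p : 𝕎) ^ E) • Vm G)) :=
      ev_smul _ (ev_p_pow_smul _ (ev_one_iff.mpr (wittPi_Vm_zero G)))
    refine ⟨(↑U⁻¹ : 𝕎) • (((p : 𝕎) ^ E) • Vm G), ?_, hev, ?_, ?_⟩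
    · rw [smul_smul, smul_smul]
      have hc : ((v.factorial : ℕ) : 𝕎) * (↑U⁻¹ : 𝕎) * (p : 𝕎) ^ E
          = (p : 𝕎) ^ (E + m) := by
        have hcast : ((v.factorial : ℕ) : 𝕎) = (p : 𝕎) ^ m * ((u : ℕ) : 𝕎) := by
          rw [hfc]; push_cast; ring
        calc ((v.factorial : ℕ) : 𝕎) * (↑U⁻¹ : 𝕎) * (p : 𝕎) ^ E
            = (p : 𝕎) ^ m * (p : 𝕎) ^ E * ((↑U : 𝕎) * (↑U⁻¹ : 𝕎)) := by
              rw [hcast, ← hU]; ring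
          _ = (p : 𝕎) ^ (E + m) := by
              rw [Units.mul_inv, mul_one, ← pow_add]
              congr 1
              omega
      rw [hc, hXv]
    · exact ev_one_iff.mp (ev_mono (by omega) hev)
    · rcases Nat.eq_zero_or_pos E with hE | hE
      · exact hB0 hE
      · refine ⟨0, Commute.zero_right _, ?_⟩
        rw [mul_zero]
        exact hev 1 (by omega)
  by_cases hvt : v < t
  · have hXv : X ^ v = ((p : 𝕎) ^ ((v - 1 - m) + m)) • Vm ((shm X) ^ v) := by
      rw [pow_of_V h0 v hv]
      congr 2
      omega
    have hB0 : (v - 1 - m = 0 → ∃ B, Commute (wittPi p 1 X) B ∧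
        wittPi p 1 ((↑U⁻¹ : 𝕎) • (((p : 𝕎) ^ (v - 1 - m)) • Vm ((shm X) ^ v)))
          = wittPi p 1 X * B) := by
      intro hE0
      rw [hE0, pow_zero, one_smul, smul_Vm, wittPi_Vm_one, wittPi_zero_smul, wittPi_zero_pow,
        hX1]
      refine ⟨((frobenius (↑U⁻¹ : 𝕎)).coeff 0) • wittPi p 1 X ^ (v - 1),
        ((Commute.refl (wittPi p 1 X)).pow_right (v - 1)).smul_right _, ?_⟩
      have hpow : wittPi p 1 X ^ v = wittPi p 1 X * wittPi p 1 X ^ (v - 1) := by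
        conv_lhs => rw [show v = 1 + (v - 1) by omega]
        rw [pow_add, pow_one]
      rw [hpow, mul_smul_comm]
    obtain ⟨e, h1', h2', h3', h4'⟩ := key (v - 1 - m) ((shm X) ^ v) hXv hB0
    refine ⟨e, h1', ev_mono ?_ h2', h3', h4'⟩
    have hvt0 : v / t = 0 := Nat.div_eq_of_lt hvt
    omega
  · push_neg at hvt
    have hq1 : 1 ≤ v / t := (Nat.one_le_div_iff (by omega)).mpr hvt
    have hY0 : wittPi p 0 ((shm X) ^ t) = 0 := by rw [wittPi_zero_pow, hX1, h1]
    obtain ⟨Z, hZ0, hZ⟩ := pow_eq_p_pow_smul hY0 (v / t) hq1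
    set q := v / t with hqdef
    set G := Z * (shm X) ^ (v % t) with hGdef
    have hG0 : wittPi p 0 G = 0 := by rw [hGdef, wittPi_zero_mul, hZ0, zero_mul]
    have hshm : (shm X) ^ v = ((p : 𝕎) ^ (q - 1)) • G := by
      have hsplit : v = t * q + v % t := (Nat.div_add_mod v t).symm
      conv_lhs => rw [hsplit]
      rw [pow_add, pow_mul, hZ, smul_mul_assoc]
    have hXv : X ^ v = ((p : 𝕎) ^ (((v - 1 - m) + (q - 1)) + m)) • Vm G := by
      rw [pow_of_V h0 v hv, hshm, Vm_p_pow_smul, smul_smul, ← pow_add]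
      congr 2
      omega
    have hB0 : ((v - 1 - m) + (q - 1) = 0 → ∃ B, Commute (wittPi p 1 X) B ∧
        wittPi p 1 ((↑U⁻¹ : 𝕎) • (((p : 𝕎) ^ ((v - 1 - m) + (q - 1))) • Vm G))
          = wittPi p 1 X * B) := by
      intro hE0
      refine ⟨0, Commute.zero_right _, ?_⟩
      rw [mul_zero, hE0, pow_zero, one_smul, smul_Vm, wittPi_Vm_one, wittPi_zero_smul, hG0,
        smul_zero]
    obtain ⟨e, h1', h2', h3', h4'⟩ := key ((v - 1 - m) + (q - 1)) G hXv hB0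
    exact ⟨e, h1', ev_mono (by omega) h2', h3', h4'⟩


/-! ### assembly -/

theorem assemble {X : MW} (s' : ℕ) (hs' : 1 ≤ s') (e : ℕ → MW)
    (hfac : ∀ v, 1 ≤ v → ((v.factorial : ℕ) : 𝕎) • e v = X ^ v)
    (hEV : ∀ v, 1 ≤ v → EntrywiseV p (v / s') (e v)) :
    IsExpPartialSums p X (fun N => ∑ v ∈ Finset.Icc 1 N, e v) ∧
    ∃ L, TendstoV p (fun N => ∑ v ∈ Finset.Icc 1 N, e v) L ∧
      (∀ L', TendstoV p (fun N => ∑ v ∈ Finset.Icc 1 N, e v) L' → L' = L) ∧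
      (∀ d N, s' * d ≤ N → EntrywiseV p d ((∑ v ∈ Finset.Icc 1 N, e v) - L)) := by
  have h01 : ∀ k : ℕ, Finset.Icc 1 k = Finset.Ioc 0 k := fun k => rfl
  have hdiff : ∀ Mm N : ℕ, Mm ≤ N →
      (∑ v ∈ Finset.Icc 1 N, e v) - (∑ v ∈ Finset.Icc 1 Mm, e v)
        = ∑ v ∈ Finset.Ioc Mm N, e v := by
    intro Mm N h
    have hcons := Finset.sum_Ioc_consecutive e (Nat.zero_le Mm) h
    rw [h01, h01, ← hcons, add_sub_cancel_left]
  have hcauchy : ∀ d Mm N : ℕ, s' * d ≤ Mm → Mm ≤ N →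
      EntrywiseV p d ((∑ v ∈ Finset.Icc 1 N, e v) - (∑ v ∈ Finset.Icc 1 Mm, e v)) := by
    intro d Mm N hdM hMN
    rw [hdiff Mm N hMN]
    apply ev_sum
    intro v hv
    rw [Finset.mem_Ioc] at hv
    refine ev_mono ?_ (hEV v (by omega))
    rw [Nat.le_div_iff_mul_le (by omega), Nat.mul_comm]
    omega
  constructor
  · intro N hN
    rw [Finset.smul_sum]
    refine Finset.sum_congr rfl fun v hv => ?_
    rw [Finset.mem_Icc] at hv
    have h1 : v.factorial ∣ N.factorial := Nat.factorial_dvd_factorial hv.2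
    calc N.factorial • e v = ((N.factorial / v.factorial) * v.factorial) • e v := by
          rw [Nat.div_mul_cancel h1]
      _ = (N.factorial / v.factorial) • (v.factorial • e v) := by rw [mul_smul]
      _ = (N.factorial / v.factorial) • X ^ v := by
          rw [← Nat.cast_smul_eq_nsmul (WittVector p A) v.factorial (e v), hfac v hv.1]
  · set L : MW := Matrix.of fun a b =>
      WittVector.mk p fun j => ((∑ v ∈ Finset.Icc 1 (s' * (j + 1)), e v) a b).coeff j with hLdef
    have hLcoeff : ∀ (a b : Fin n) (j : ℕ),
        (L a b).coeff j = ((∑ v ∈ Finset.Icc 1 (s' * (j + 1)), e v) a b).coeff j := by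
      intro a b j
      rw [hLdef]
      simp only [Matrix.of_apply, coeff_mk]
    have hstab : ∀ (j N : ℕ), s' * (j + 1) ≤ N → ∀ a b : Fin n,
        ((∑ v ∈ Finset.Icc 1 N, e v) a b).coeff j = (L a b).coeff j := by
      intro j N hNN a b
      have h := hcauchy (j + 1) (s' * (j + 1)) N le_rfl hNN
      have h2 := (entrywiseV_sub_iff.mp h) j (by omega) a b
      rw [h2, hLcoeff]
    have hT : TendstoV p (fun N => ∑ v ∈ Finset.Icc 1 N, e v) L := by
      intro d
      refine ⟨s' * d, fun N hN => ?_⟩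
      rw [entrywiseV_sub_iff]
      intro j hj a b
      exact hstab j N (le_trans (Nat.mul_le_mul_left s' (by omega)) hN) a b
    refine ⟨L, hT, ?_, ?_⟩
    · intro L' hL'
      apply Matrix.ext
      intro a b
      apply WittVector.ext
      intro j
      obtain ⟨N₁, h1⟩ := hL' (j + 1)
      obtain ⟨N₂, h2⟩ := hT (j + 1)
      have e1 := entrywiseV_sub_iff.mp (h1 (max N₁ N₂) (le_max_left _ _)) j (by omega) a b
      have e2 := entrywiseV_sub_iff.mp (h2 (max N₁ N₂) (le_max_right _ _)) j (by omega) a b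
      rw [← e1, ← e2]
    · intro d N hdN
      rw [entrywiseV_sub_iff]
      intro j hj a b
      exact hstab j N (le_trans (Nat.mul_le_mul_left s' (by omega)) hdN) a b


/-! ### commuting factor sums -/

theorem exists_commute_factor_sum {C : Matrix (Fin n) (Fin n) A} {ι : Type*}
    (t : Finset ι) (f : ι → Matrix (Fin n) (Fin n) A)
    (h : ∀ i ∈ t, ∃ B, Commute C B ∧ f i = C * B) :
    ∃ B, Commute C B ∧ (∑ i ∈ t, f i) = C * B := by
  classical
  induction t using Finset.cons_induction with
  | empty => exact ⟨0, Commute.zero_right _, by simp⟩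
  | cons i t hi ih =>
    obtain ⟨B1, hc1, he1⟩ := h i (Finset.mem_cons_self i t)
    obtain ⟨B2, hc2, he2⟩ := ih fun j hj => h j (Finset.mem_cons_of_mem hj)
    exact ⟨B1 + B2, hc1.add_right hc2, by rw [Finset.sum_cons, he1, he2, mul_add]⟩

theorem pow_factor_zero {C D : Matrix (Fin n) (Fin n) A} {s : ℕ} (hC : C ^ s = 0)
    (h : ∃ B, Commute C B ∧ D = C * B) : D ^ s = 0 := by
  obtain ⟨B, hc, he⟩ := h
  rw [he, hc.mul_pow, hC, zero_mul]

end ExpAux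

open ExpAux

/-- Proposition B.2 (b), exponential part: for `X ∈ Σ`, the exponential partial sums exist,
lie in `Σ`, and converge V-adically to a unique limit, which lies in `Σ`. -/
theorem exp_partial_sums_exist_and_converge (p : ℕ) [Fact p.Prime] (A : Type*) [CommRing A]
    [CharP A p] [IsReduced A] (n : ℕ) (hn : 1 ≤ n)
    (S : Set (Matrix (Fin n) (Fin n) (WittVector p A))) (hS : IsSigmaEither p S)
    (X : Matrix (Fin n) (Fin n) (WittVector p A)) (hX : X ∈ S) :
    ∃ E : ℕ → Matrix (Fin n) (Fin n) (WittVector p A),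
      IsExpPartialSums p X E ∧ (∀ N, 1 ≤ N → E N ∈ S) ∧
      ∃ L, L ∈ S ∧ TendstoV p E L ∧ ∀ L', TendstoV p E L' → L' = L := by
  classical
  have hp2 : 2 ≤ p := (Fact.out : p.Prime).two_le
  rcases hS with ⟨s, hodd, hs1, hs2, rfl⟩ | ⟨t, ht, rfl⟩
  · -- case Σ_s
    have hX0 : wittPi p 0 X ^ s = 0 := hX
    have h2s : 2 * s ≤ p - 1 := by
      have h := Nat.div_mul_le_self (p - 1) 2
      omega
    have hterm : ∀ v : ℕ, ∃ e : Matrix (Fin n) (Fin n) (WittVector p A), 1 ≤ v →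
        (((v.factorial : ℕ) : WittVector p A) • e = X ^ v ∧
          EntrywiseV p (v / (p - 1)) e ∧
          ∃ B, Commute (wittPi p 0 X) B ∧ wittPi p 0 e = wittPi p 0 X * B) := by
      intro v
      by_cases hv : 1 ≤ v
      · obtain ⟨e, h1, h2, h3⟩ := exists_term_sigmaS hs1 h2s hX0 v hv
        exact ⟨e, fun _ => ⟨h1, h2, h3⟩⟩
      · exact ⟨0, fun h => absurd h hv⟩
    choose e he using hterm
    obtain ⟨hPS, L, hT, huniq, hclose⟩ := assemble (p - 1) (by omega) e
      (fun v hv => (he v hv).1) (fun v hv => (he v hv).2.1)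
    have hmem : ∀ N : ℕ, wittPi p 0 (∑ v ∈ Finset.Icc 1 N, e v) ^ s = 0 := by
      intro N
      rw [wittPi_zero_sum]
      refine pow_factor_zero hX0 (exists_commute_factor_sum _ _ fun v hv => ?_)
      exact (he v (Finset.mem_Icc.mp hv).1).2.2
    refine ⟨fun N => ∑ v ∈ Finset.Icc 1 N, e v, hPS, fun N _ => hmem N, L, ?_, hT, huniq⟩
    obtain ⟨N₀, hN₀⟩ := hT 1
    have h := entrywiseV_sub_iff.mp (hN₀ N₀ le_rfl)
    have hL0 : wittPi p 0 L = wittPi p 0 (∑ v ∈ Finset.Icc 1 N₀, e v) := by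
      apply Matrix.ext
      intro a b
      exact (h 0 one_pos a b).symm
    show wittPi p 0 L ^ s = 0
    rw [hL0]
    exact hmem N₀
  · -- case Σ_{1,t}
    obtain ⟨hX0, hX1⟩ := hX
    have hterm : ∀ v : ℕ, ∃ e : Matrix (Fin n) (Fin n) (WittVector p A), 1 ≤ v →
        (((v.factorial : ℕ) : WittVector p A) • e = X ^ v ∧
          EntrywiseV p (v / t) e ∧ wittPi p 0 e = 0 ∧
          ∃ B, Commute (wittPi p 1 X) B ∧ wittPi p 1 e = wittPi p 1 X * B) := by
      intro v
      by_cases hv : 1 ≤ v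
      · obtain ⟨e, h1, h2, h3, h4⟩ := exists_term_sigma1t ht hX0 hX1 v hv
        exact ⟨e, fun _ => ⟨h1, h2, h3, h4⟩⟩
      · exact ⟨0, fun h => absurd h hv⟩
    choose e he using hterm
    obtain ⟨hPS, L, hT, huniq, hclose⟩ := assemble t ht e
      (fun v hv => (he v hv).1) (fun v hv => (he v hv).2.1)
    have hmem0 : ∀ N : ℕ, wittPi p 0 (∑ v ∈ Finset.Icc 1 N, e v) = 0 := by
      intro N
      rw [wittPi_zero_sum]
      exact Finset.sum_eq_zero fun v hv => (he v (Finset.mem_Icc.mp hv).1).2.2.1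
    have hmem1 : ∀ N : ℕ, wittPi p 1 (∑ v ∈ Finset.Icc 1 N, e v) ^ t = 0 := by
      intro N
      rw [wittPi_one_sum fun v hv => (he v (Finset.mem_Icc.mp hv).1).2.2.1]
      refine pow_factor_zero hX1 (exists_commute_factor_sum _ _ fun v hv => ?_)
      exact (he v (Finset.mem_Icc.mp hv).1).2.2.2
    refine ⟨fun N => ∑ v ∈ Finset.Icc 1 N, e v, hPS, fun N _ => ⟨hmem0 N, hmem1 N⟩,
      L, ?_, hT, huniq⟩
    obtain ⟨N₀, hN₀⟩ := hT 2
    have h := entrywiseV_sub_iff.mp (hN₀ N₀ le_rfl)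
    have hL0 : wittPi p 0 L = wittPi p 0 (∑ v ∈ Finset.Icc 1 N₀, e v) := by
      apply Matrix.ext
      intro a b
      exact (h 0 (by omega) a b).symm
    have hL1 : wittPi p 1 L = wittPi p 1 (∑ v ∈ Finset.Icc 1 N₀, e v) := by
      apply Matrix.ext
      intro a b
      exact (h 1 (by omega) a b).symm
    exact ⟨by rw [hL0]; exact hmem0 N₀, by rw [hL1]; exact hmem1 N₀⟩
end

section
/- Let p be a prime, k a perfect field of characteristic p, W(k) the ring of p-typical Witt vectors of k, and σ : W(k) → W(k) the Witt-vector Frobenius automorphism. Let M be a free W(k)-module of finite rank and φ : M → M an injective additive map with φ(a·x) = σ(a)·φ(x) for all a ∈ W(k), x ∈ M, such that p·M ⊆ φ(M). Let K := {x ∈ M : φ(x) ∈ p·M}. Then for all W(k)-linear automorphisms g, g₁ of M, the following are equivalent: (i) there exists a W(k)-linear automorphism g₂ of M with g₂ ∘ φ = g ∘ g₁ ∘ φ ∘ g^{-1} as maps M → M; (ii) g(K) = K. -/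
section Aux

variable (p : ℕ) [Fact p.Prime] (k : Type*) [Field k] [CharP k p] [PerfectRing k p]
variable (M : Type*) [AddCommGroup M] [Module (WittVector p k) M]
variable [Module.Free (WittVector p k) M]

omit [PerfectRing k p] in
theorem wv_smul_cancel {x y : M} (h : (p : WittVector p k) • x = (p : WittVector p k) • y) :
    x = y :=
  smul_right_injective M (WittVector.p_nonzero p k) h

/-- Existence of a linear map `F` with `p • F x = ψ y` whenever `φ y = p • x`. -/
theorem aux_exists_linear (φ ψ : M → M)
    (haddφ : ∀ x y, φ (x + y) = φ x + φ y)
    (haddψ : ∀ x y, ψ (x + y) = ψ x + ψ y)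
    (hsemiφ : ∀ (a : WittVector p k) (x : M), φ (a • x) = WittVector.frobenius a • φ x)
    (hsemiψ : ∀ (a : WittVector p k) (x : M), ψ (a • x) = WittVector.frobenius a • ψ x)
    (hinjφ : Function.Injective φ)
    (hpMφ : ∀ x : M, ∃ y : M, φ y = (p : WittVector p k) • x)
    (hK : ∀ x, (∃ y, φ x = (p : WittVector p k) • y) → (∃ y, ψ x = (p : WittVector p k) • y)) :
    ∃ F : M →ₗ[WittVector p k] M,
      ∀ x y : M, φ y = (p : WittVector p k) • x → ψ y = (p : WittVector p k) • F x := by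
  have hc : ∀ a b : M, (p : WittVector p k) • a = (p : WittVector p k) • b → a = b :=
    fun a b h => wv_smul_cancel p k M h
  have hFex : ∀ x : M, ∃ z : M, ∀ y : M,
      φ y = (p : WittVector p k) • x → ψ y = (p : WittVector p k) • z := by
    intro x
    obtain ⟨y₀, hy₀⟩ := hpMφ x
    obtain ⟨z, hz⟩ := hK y₀ ⟨x, hy₀⟩
    refine ⟨z, fun y hy => ?_⟩
    have : y = y₀ := hinjφ (hy.trans hy₀.symm)
    rw [this, hz]
  choose F hF using hFex
  refine ⟨⟨⟨F, ?_⟩, ?_⟩, fun x y h => hF x y h⟩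
  · intro x₁ x₂
    apply hc
    obtain ⟨y₁, hy₁⟩ := hpMφ x₁
    obtain ⟨y₂, hy₂⟩ := hpMφ x₂
    have h12 : φ (y₁ + y₂) = (p : WittVector p k) • (x₁ + x₂) := by
      rw [haddφ, hy₁, hy₂, smul_add]
    rw [← hF (x₁ + x₂) (y₁ + y₂) h12, haddψ, hF x₁ y₁ hy₁, hF x₂ y₂ hy₂, smul_add]
  · intro a x
    apply hc
    obtain ⟨y, hy⟩ := hpMφ x
    obtain ⟨b, hb⟩ := (WittVector.frobenius_bijective p k).2 a
    have h1 : φ (b • y) = (p : WittVector p k) • (a • x) := by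
      rw [hsemiφ, hb, hy, smul_comm]
    calc (p : WittVector p k) • F (a • x) = ψ (b • y) := (hF _ _ h1).symm
      _ = WittVector.frobenius b • ψ y := hsemiψ b y
      _ = a • ((p : WittVector p k) • F x) := by rw [hb, hF x y hy]
      _ = (p : WittVector p k) • (a • F x) := smul_comm _ _ _

/-- Key lemma: if `φ` and `ψ` are semilinear, injective, with `p·M` contained in both images,
and `φ⁻¹(pM) = ψ⁻¹(pM)`, then there is a linear automorphism `g₂` with `g₂ ∘ φ = ψ`. -/
theorem aux_exists_equiv (φ ψ : M → M)
    (haddφ : ∀ x y, φ (x + y) = φ x + φ y)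
    (haddψ : ∀ x y, ψ (x + y) = ψ x + ψ y)
    (hsemiφ : ∀ (a : WittVector p k) (x : M), φ (a • x) = WittVector.frobenius a • φ x)
    (hsemiψ : ∀ (a : WittVector p k) (x : M), ψ (a • x) = WittVector.frobenius a • ψ x)
    (hinjφ : Function.Injective φ)
    (hinjψ : Function.Injective ψ)
    (hpMφ : ∀ x : M, ∃ y : M, φ y = (p : WittVector p k) • x)
    (hpMψ : ∀ x : M, ∃ y : M, ψ y = (p : WittVector p k) • x)
    (hK : ∀ x, (∃ y, φ x = (p : WittVector p k) • y) ↔ (∃ y, ψ x = (p : WittVector p k) • y)) :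
    ∃ g₂ : M ≃ₗ[WittVector p k] M, ∀ x : M, g₂ (φ x) = ψ x := by
  have hc : ∀ a b : M, (p : WittVector p k) • a = (p : WittVector p k) • b → a = b :=
    fun a b h => wv_smul_cancel p k M h
  obtain ⟨F, hF⟩ := aux_exists_linear p k M φ ψ haddφ haddψ hsemiφ hsemiψ hinjφ hpMφ
    (fun x h => (hK x).mp h)
  obtain ⟨G, hG⟩ := aux_exists_linear p k M ψ φ haddψ haddφ hsemiψ hsemiφ hinjψ hpMψ
    (fun x h => (hK x).mpr h)
  have hFφ : ∀ x, F (φ x) = ψ x := by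
    intro x
    apply hc
    have hpx : φ ((p : WittVector p k) • x) = (p : WittVector p k) • φ x := by
      rw [hsemiφ, map_natCast]
    rw [← hF (φ x) ((p : WittVector p k) • x) hpx, hsemiψ, map_natCast]
  have hGF : ∀ x, G (F x) = x := by
    intro x
    obtain ⟨y, hy⟩ := hpMφ x
    exact hc _ _ ((hG (F x) y (hF x y hy)).symm.trans hy)
  have hFG : ∀ x, F (G x) = x := by
    intro x
    obtain ⟨y, hy⟩ := hpMψ x
    exact hc _ _ ((hF (G x) y (hG x y hy)).symm.trans hy)
  refine ⟨LinearEquiv.ofLinear F G (LinearMap.ext fun x => hFG x)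
    (LinearMap.ext fun x => hGF x), fun x => hFφ x⟩

end Aux

/-- Fact 3.2 of the paper: for a σ-semilinear injective `φ : M → M` with `p·M ⊆ φ(M)` and
`K = φ⁻¹(p·M)`, a pair of `W(k)`-linear automorphisms `g, g₁` of `M` admits a `W(k)`-linear
automorphism `g₂` with `g₂ ∘ φ = g ∘ g₁ ∘ φ ∘ g⁻¹` if and only if `g(K) = K`. -/
theorem exists_conjugate_iff_normalizes (p : ℕ) [Fact p.Prime] (k : Type*) [Field k]
    [CharP k p] [PerfectRing k p]
    (M : Type*) [AddCommGroup M] [Module (WittVector p k) M]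
    [Module.Free (WittVector p k) M] [Module.Finite (WittVector p k) M]
    (φ : M → M)
    (hadd : ∀ x y, φ (x + y) = φ x + φ y)
    (hsemi : ∀ (a : WittVector p k) (x : M), φ (a • x) = WittVector.frobenius a • φ x)
    (hinj : Function.Injective φ)
    (hpM : ∀ x : M, ∃ y : M, φ y = (p : WittVector p k) • x)
    (g g₁ : M ≃ₗ[WittVector p k] M) :
    (∃ g₂ : M ≃ₗ[WittVector p k] M, ∀ x : M, g₂ (φ x) = g (g₁ (φ (g.symm x)))) ↔
      (⇑g '' {x : M | ∃ y : M, φ x = (p : WittVector p k) • y} =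
        {x : M | ∃ y : M, φ x = (p : WittVector p k) • y}) := by
  set W := WittVector p k
  set ψ : M → M := fun x => g (g₁ (φ (g.symm x))) with hψdef
  set K : Set M := {x : M | ∃ y : M, φ x = (p : W) • y} with hKdef
  -- membership in g '' K is equivalent to a condition on ψ
  have hKψ : ∀ x : M, (∃ y, ψ x = (p : W) • y) ↔ x ∈ ⇑g '' K := by
    intro x
    constructor
    · rintro ⟨y, hy⟩
      refine ⟨g.symm x, ⟨g₁.symm (g.symm y), ?_⟩, by simp⟩
      have : g₁ (φ (g.symm x)) = g.symm ((p : W) • y) := by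
        rw [← hy]; simp [hψdef]
      rw [map_smul] at this
      have h2 : φ (g.symm x) = g₁.symm ((p : W) • g.symm y) := by
        rw [← this]; simp
      rw [map_smul] at h2
      exact h2
    · rintro ⟨u, ⟨z, hz⟩, rfl⟩
      refine ⟨g (g₁ z), ?_⟩
      simp only [hψdef, LinearEquiv.symm_apply_apply, hz, map_smul]
  constructor
  · rintro ⟨g₂, hg₂⟩
    ext x
    rw [← hKψ x]
    have : (∃ y, ψ x = (p : W) • y) ↔ (∃ y, g₂ (φ x) = (p : W) • y) := by
      constructor
      · rintro ⟨y, hy⟩; exact ⟨y, by rw [hg₂ x]; exact hy⟩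
      · rintro ⟨y, hy⟩; exact ⟨y, (hg₂ x).symm.trans hy⟩
    rw [this]
    constructor
    · rintro ⟨y, hy⟩
      refine ⟨g₂.symm y, ?_⟩
      have : φ x = g₂.symm ((p : W) • y) := by rw [← hy]; simp
      rwa [map_smul] at this
    · rintro ⟨y, hy⟩
      exact ⟨g₂ y, by rw [hy, map_smul]⟩
  · intro hgK
    refine aux_exists_equiv p k M φ ψ hadd ?_ hsemi ?_ hinj ?_ hpM ?_ ?_
    · intro x y
      simp only [hψdef, map_add, hadd]
    · intro a x
      simp only [hψdef, map_smul, hsemi]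
    · intro x y hxy
      simp only [hψdef] at hxy
      have := hinj (g₁.injective (g.injective hxy))
      exact g.symm.injective this
    · intro x
      obtain ⟨u, hu⟩ := hpM (g₁.symm (g.symm x))
      refine ⟨g u, ?_⟩
      simp only [hψdef, LinearEquiv.symm_apply_apply, hu, map_smul,
        LinearEquiv.apply_symm_apply]
    · intro x
      rw [hKψ x, hgK]
      exact Iff.rfl
end

section
/- Let p be a prime, k a perfect field of characteristic p, and V a finite-dimensional k-vector space. Let φ : V → V be an additive map with φ(a·x) = a^p·φ(x) for all a ∈ k, x ∈ V, and let ϑ : V → V be an additive map with ϑ(a^p·x) = a·ϑ(x) for all a ∈ k, x ∈ V. Assume that the image of φ equals the kernel of ϑ and the kernel of φ equals the image of ϑ. If e : V → V is a k-linear endomorphism satisfying e∘φ = φ∘e and e∘ϑ = ϑ∘e, then every coefficient c of the characteristic polynomial of e satisfies c^p = c (i.e. the characteristic polynomial of e has coefficients in the prime field 𝔽_p). -/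
/-!
Let `σ` be the Frobenius of `k`, so that `φ` is `σ`-semilinear and `ϑ` is `σ⁻¹`-semilinear.
If `F` is `σ`-semilinear and `F ∘ g = f ∘ F`, the first isomorphism theorem identifies
`V ⧸ ker F` `σ`-semilinearly with `range F`, whence `σ χ_g = σ χ_{g|ker F} · χ_{f|range F}`.
With `A = χ_{e|ker φ}` and `B = χ_{e|im φ}`, applying this to `φ` gives `σ χ_e = σ A · B`, and
applying it to `ϑ` (using `ker ϑ = im φ`, `im ϑ = ker φ`) gives `σ⁻¹ χ_e = σ⁻¹ B · A`.
Applying `σ` to the second identity and comparing with the first yields `σ χ_e = χ_e`.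
-/

open Polynomial

namespace LinearMap

section Semiconj

variable {R S M N : Type*} [Semiring R] [Semiring S] [AddCommMonoid M] [Module R M]
  [AddCommMonoid N] [Module S N] {σ : R →+* S} (F : M →ₛₗ[σ] N) {g : M →ₗ[R] M} {f : N →ₗ[S] N}

theorem ker_le_comap_of_semiconj (h : Function.Semiconj F g f) : ker F ≤ (ker F).comap g :=
  fun x (hx : F x = 0) ↦ by rw [Submodule.mem_comap, mem_ker, h.eq, hx, map_zero]

theorem range_le_comap_of_semiconj [RingHomSurjective σ] (h : Function.Semiconj F g f) :
    range F ≤ (range F).comap f := by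
  rintro _ ⟨x, rfl⟩
  exact ⟨g x, h.eq x⟩

end Semiconj

section CommRing

variable {R M N : Type*} [CommRing R] [AddCommGroup M] [Module R M] [Module.Free R M]
  [Module.Finite R M]

open Module.Basis in
theorem charpoly_eq_charpoly_restrict_mul_charpoly_mapQ (W : Submodule R M)
    [Module.Free R W] [Module.Finite R W] [Module.Free R (M ⧸ W)]
    (e : M →ₗ[R] M) (he : W ≤ W.comap e) :
    e.charpoly = (e.restrict he).charpoly * (W.mapQ W e he).charpoly := by
  let bW := Module.Free.chooseBasis R W
  let bQ := Module.Free.chooseBasis R (M ⧸ W)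
  let b := sumQuot bW bQ
  suffices toMatrix b b e = Matrix.fromBlocks (toMatrix bW bW (e.restrict he))
      (Matrix.of fun i j ↦ b.repr (e (b (Sum.inr j))) (Sum.inl i)) 0
      (toMatrix bQ bQ (W.mapQ W e he)) by
    rw [← charpoly_toMatrix e b, this, Matrix.charpoly_fromBlocks_zero₂₁,
      charpoly_toMatrix, charpoly_toMatrix]
  ext (i | i) (j | j)
  · simp only [b, sumQuot_inl, Matrix.fromBlocks_apply₁₁, toMatrix_apply]
    apply sumQuot_repr_inl_of_mem
  · simp [toMatrix_apply, Matrix.fromBlocks_apply₁₂]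
  · have : W.mkQ (e (bW j)) = 0 := by
      rw [← mem_ker, Submodule.ker_mkQ]
      exact he (bW j).2
    simp [toMatrix_apply, b, this]
  · simp only [toMatrix_apply, sumQuot_repr_inr, Matrix.fromBlocks_apply₂₂, b]
    rw [← sumQuot_inr bW bQ j, W.mapQ_apply]
    simp

variable [AddCommGroup N] [Module R N] [Module.Free R N] [Module.Finite R N]
  {σ σ' : R →+* R} [RingHomInvPair σ σ'] [RingHomInvPair σ' σ]

theorem charpoly_eq_map_of_semiconj (T : M ≃ₛₗ[σ] N) {f : M →ₗ[R] M} {g : N →ₗ[R] N}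
    (h : Function.Semiconj T f g) : g.charpoly = f.charpoly.map σ := by
  let b := Module.Free.chooseBasis R M
  let s : R ≃ₛₗ[σ] R :=
    { σ.toSemilinearMap with
      invFun := σ'
      left_inv := fun _ ↦ RingHomInvPair.comp_apply_eq
      right_inv := fun _ ↦ RingHomInvPair.comp_apply_eq₂ }
  -- the basis `T ∘ b` of `N`, in which `g` has the matrix of `f` with `σ` applied to its entries
  let b' : Module.Basis _ R N :=
    .ofRepr <| T.symm.trans <| b.repr.trans <| Finsupp.mapRange.linearEquiv s
  have hb' : ∀ i, b' i = T (b i) := by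
    intro i
    simp only [b', Module.Basis.coe_ofRepr, LinearEquiv.trans_symm, LinearEquiv.trans_apply,
      Finsupp.mapRange.linearEquiv_symm, Finsupp.mapRange.linearEquiv_apply]
    rw [Finsupp.mapRange_single, show s.symm 1 = 1 from map_one σ', LinearEquiv.symm_symm,
      Module.Basis.repr_symm_single_one]
  have hrepr : ∀ x i, b'.repr x i = σ (b.repr (T.symm x) i) := fun _ _ ↦ rfl
  have : toMatrix b' b' g = (toMatrix b b f).map σ := by
    ext i j
    simp [toMatrix_apply, hb', hrepr, ← h.eq]
  rw [← charpoly_toMatrix g b', this, Matrix.charpoly_map, charpoly_toMatrix]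

end CommRing

section Field

variable {k V W : Type*} [Field k] [AddCommGroup V] [Module k V] [FiniteDimensional k V]
  [AddCommGroup W] [Module k W] [FiniteDimensional k W]
  {σ σ' : k →+* k} [RingHomInvPair σ σ'] [RingHomInvPair σ' σ]

theorem charpoly_map_eq_mul_of_semiconj (F : V →ₛₗ[σ] W) {g : V →ₗ[k] V} {f : W →ₗ[k] W}
    (h : Function.Semiconj F g f) {K : Submodule k V} {R : Submodule k W}
    (hK : ker F = K) (hR : range F = R) (hgK : K ≤ K.comap g) (hfR : R ≤ R.comap f) :
    g.charpoly.map σ =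
      (g.restrict hgK).charpoly.map σ * (f.restrict hfR).charpoly := by
  subst hK hR
  let Q : (V ⧸ ker F) ≃ₛₗ[σ] range F :=
    (LinearEquiv.ofInjective ((ker F).liftQ F le_rfl)
      (ker_eq_bot.mp (Submodule.ker_liftQ_eq_bot _ _ _ le_rfl))).trans
    (LinearEquiv.ofEq _ _ (Submodule.range_liftQ _ _ _))
  have hQ : Function.Semiconj Q ((ker F).mapQ (ker F) g hgK) (f.restrict hfR) := by
    rintro ⟨x⟩
    exact Subtype.ext (h x)
  rw [charpoly_eq_charpoly_restrict_mul_charpoly_mapQ (ker F) g hgK, Polynomial.map_mul,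
    charpoly_eq_map_of_semiconj Q hQ]

end Field

end LinearMap

/-- If `e` is a linear endomorphism of a finite-dimensional vector space over a perfect field
`k` of characteristic `p` commuting with a Frobenius-semilinear `φ` and an
inverse-Frobenius-semilinear `ϑ` with `im φ = ker ϑ` and `ker φ = im ϑ`, then the coefficients
of the characteristic polynomial of `e` lie in the prime field `𝔽_p`. -/
theorem charpoly_coeff_pow_p_eq (p : ℕ) [Fact p.Prime] (k : Type*) [Field k] [CharP k p]
    [PerfectRing k p] (V : Type*) [AddCommGroup V] [Module k V] [FiniteDimensional k V]
    (φ ϑ : V → V)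
    (hφadd : ∀ x y, φ (x + y) = φ x + φ y)
    (hφsemi : ∀ (a : k) (x : V), φ (a • x) = (a ^ p) • φ x)
    (hϑadd : ∀ x y, ϑ (x + y) = ϑ x + ϑ y)
    (hϑsemi : ∀ (a : k) (x : V), ϑ ((a ^ p) • x) = a • ϑ x)
    (him : Set.range φ = {x : V | ϑ x = 0})
    (hker : {x : V | φ x = 0} = Set.range ϑ)
    (e : V →ₗ[k] V)
    (heφ : ∀ x, e (φ x) = φ (e x))
    (heϑ : ∀ x, e (ϑ x) = ϑ (e x)) :
    ∀ i : ℕ, (LinearMap.charpoly e).coeff i ^ p = (LinearMap.charpoly e).coeff i := by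
  let σ := frobenius k p
  let σ' : k →+* k := (frobeniusEquiv k p).symm
  have : RingHomInvPair σ σ' :=
    ⟨frobeniusEquiv_symm_comp_frobenius k p, frobenius_comp_frobeniusEquiv_symm k p⟩
  have : RingHomInvPair σ' σ := .symm σ σ'
  let Φ : V →ₛₗ[σ] V := ⟨⟨φ, hφadd⟩, hφsemi⟩
  let Θ : V →ₛₗ[σ'] V := ⟨⟨ϑ, hϑadd⟩, fun a x ↦ by
    simpa only [show σ' a ^ p = a from frobeniusEquiv_symm_pow_p k p a] using hϑsemi (σ' a) x⟩
  have hrangeΦ : Φ.range = Θ.ker := SetLike.coe_injective him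
  have hkerΦ : Φ.ker = Θ.range := SetLike.coe_injective hker
  have heΦ : Function.Semiconj Φ e e := fun x ↦ (heφ x).symm
  have hU := LinearMap.ker_le_comap_of_semiconj Φ heΦ
  have hW := LinearMap.range_le_comap_of_semiconj Φ heΦ
  have hΦ := LinearMap.charpoly_map_eq_mul_of_semiconj Φ heΦ rfl rfl hU hW
  have hΘ := LinearMap.charpoly_map_eq_mul_of_semiconj Θ (fun x ↦ (heϑ x).symm)
    hrangeΦ.symm hkerΦ.symm hW hU
  have hfixed : e.charpoly.map σ = e.charpoly :=
    calc e.charpoly.map σ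
      _ = ((e.restrict hW).charpoly.map σ' * (e.restrict hU).charpoly).map σ := by
        rw [hΦ, Polynomial.map_mul, map_map, RingHomInvPair.comp_eq₂, Polynomial.map_id,
          mul_comm]
      _ = e.charpoly := by
        rw [← hΘ, map_map, RingHomInvPair.comp_eq₂, Polynomial.map_id]
  intro i
  simpa [σ, frobenius_def, coeff_map] using congrArg (coeff · i) hfixed
end

section
/- Let p be a prime, k a perfect field of characteristic p, n ≥ 1, and let i > s ≥ 1 be integers. Let W_i(k) := W(k)/p^i W(k) be the ring of Witt vectors of length i of k, and let e ∈ M_n(W_i(k)) be a matrix whose image ē ∈ M_n(k) under the reduction W_i(k) → k is nonzero and nilpotent. Then the matrix b := 1 + p^s·e satisfies b^{p^{i−s}} = 1 and b^{p^{i−s−1}} ≠ 1; in particular b is an invertible matrix of exact order p^{i−s}. -/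
private lemma nat_dvd_aux {p : ℕ} (hp : p.Prime) (T m : ℕ) (hT : 1 ≤ T) (hm : m + 2 ≤ p) :
    p ^ (T + 1) ∣ p.choose (m + 2) * p ^ (T * (m + 2)) := by
  rcases eq_or_lt_of_le hm with h | h
  · have h0 : T * 2 ≤ T * (m + 2) := Nat.mul_le_mul_left T (by omega)
    exact Dvd.dvd.mul_left (pow_dvd_pow p (by omega)) _
  · have h1 : p ∣ p.choose (m + 2) := Nat.Prime.dvd_choose_self hp (by omega) h
    have h0 : T * 1 ≤ T * (m + 2) := Nat.mul_le_mul_left T (by omega)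
    calc p ^ (T + 1) = p * p ^ T := by ring
    _ ∣ p.choose (m + 2) * p ^ (T * (m + 2)) :=
        mul_dvd_mul h1 (pow_dvd_pow p (by omega))

private lemma step_lemma {A : Type*} [Ring A] {p : ℕ} (hp : p.Prime) (T : ℕ) (hT : 1 ≤ T)
    (c : A) :
    ∃ g : A, Commute c g ∧
      (1 + (p : A) ^ T * c) ^ p = 1 + (p : A) ^ (T + 1) * (c + c ^ 2 * g) := by
  obtain ⟨P, hP⟩ : ∃ P, p = P + 2 := ⟨p - 2, by have := hp.two_le; omega⟩
  set a : ℕ → ℕ := fun j => p.choose j * p ^ (T * j) / p ^ (T + 1) with ha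
  have hadvd : ∀ m, m + 2 ≤ p → p ^ (T + 1) * a (m + 2) = p.choose (m + 2) * p ^ (T * (m + 2)) :=
    fun m hm => Nat.mul_div_cancel' (nat_dvd_aux hp T m hT hm)
  set F : ℕ → A := fun m => ((p.choose m * p ^ (T * m) : ℕ) : A) * c ^ m with hFdef
  set S : A := ∑ m ∈ Finset.range (P + 1), ((a (m + 2) : ℕ) : A) * c ^ m with hS
  refine ⟨S, ?_, ?_⟩
  · exact Commute.sum_right _ _ _ fun m _ =>
      ((Nat.cast_commute (a (m + 2)) c).symm.mul_right ((Commute.refl c).pow_right m))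
  have hqc : Commute ((p : A) ^ T) c := (Nat.cast_commute p c).pow_left T
  have key : (1 + (p : A) ^ T * c) ^ p = ∑ m ∈ Finset.range (p + 1), F m := by
    rw [add_comm, (Commute.one_right ((p : A) ^ T * c)).add_pow]
    refine Finset.sum_congr rfl fun m _ => ?_
    rw [one_pow, mul_one, hqc.mul_pow, ← pow_mul]
    have hc := (Nat.cast_commute (p.choose m) ((p : A) ^ (T * m) * c ^ m)).eq
    simp only [hFdef]
    push_cast
    rw [← mul_assoc] at hc
    rw [← hc, mul_assoc]
  have hF0 : F 0 = 1 := by simp [hFdef]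
  have hF1 : F (0 + 1) = (p : A) ^ (T + 1) * c := by
    have h1 : p.choose 1 * p ^ (T * 1) = p ^ (T + 1) := by
      rw [Nat.choose_one_right, Nat.mul_one, pow_succ']
    simp only [hFdef, zero_add, h1, pow_one]
    push_cast
    rfl
  have hF2 : ∀ m ∈ Finset.range (P + 1), F (m + 1 + 1)
      = (p : A) ^ (T + 1) * (((a (m + 2) : ℕ) : A) * c ^ m * c ^ 2) := by
    intro m hm
    have hmle : m + 2 ≤ p := by
      simp only [Finset.mem_range] at hm; omega
    simp only [hFdef]
    rw [show m + 1 + 1 = m + 2 from rfl, ← hadvd m hmle]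
    push_cast
    rw [pow_add c m 2]
    simp [mul_assoc]
  have hterm : ∀ m ∈ Finset.range (P + 1),
      c ^ 2 * (((a (m + 2) : ℕ) : A) * c ^ m) = ((a (m + 2) : ℕ) : A) * c ^ m * c ^ 2 := by
    intro m _
    exact ((Nat.cast_commute (a (m + 2)) (c ^ 2)).symm.mul_right
      ((Commute.refl c).pow_pow 2 m)).eq
  have step1 : c ^ 2 * S = ∑ m ∈ Finset.range (P + 1),
      ((a (m + 2) : ℕ) : A) * c ^ m * c ^ 2 := by
    rw [hS, Finset.mul_sum]
    exact Finset.sum_congr rfl hterm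
  have step2 : (p : A) ^ (T + 1) * (c + c ^ 2 * S)
      = (p : A) ^ (T + 1) * c + ∑ m ∈ Finset.range (P + 1),
          (p : A) ^ (T + 1) * (((a (m + 2) : ℕ) : A) * c ^ m * c ^ 2) := by
    rw [mul_add, step1, Finset.mul_sum]
  rw [key, show p + 1 = P + 2 + 1 from by omega, Finset.sum_range_succ',
    show P + 2 = P + 1 + 1 from rfl, Finset.sum_range_succ', hF0, hF1,
    Finset.sum_congr rfl hF2, step2]
  abel

private lemma nilp_step {B : Type*} [Ring B] {c g : B} (hcg : Commute c g)
    (hc0 : c ≠ 0) (hcn : IsNilpotent c) :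
    c + c ^ 2 * g ≠ 0 ∧ IsNilpotent (c + c ^ 2 * g) := by
  obtain ⟨N, hN⟩ := hcn
  have hx : IsNilpotent (c * g) := ⟨N, by rw [hcg.mul_pow, hN, zero_mul]⟩
  have heq : c + c ^ 2 * g = c * (1 + c * g) := by noncomm_ring
  have hu : IsUnit (1 + c * g) := hx.isUnit_one_add
  have hcomm : Commute c (1 + c * g) :=
    (Commute.one_right c).add_right ((Commute.refl c).mul_right hcg)
  constructor
  · rw [heq]
    exact fun h => hc0 ((hu.mul_left_eq_zero).mp h)
  · rw [heq]
    exact ⟨N, by rw [hcomm.mul_pow, hN, zero_mul]⟩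

private theorem main_aux {R κ : Type*} [CommRing R] [CommRing κ] (p n i s : ℕ)
    (hp : p.Prime) (hs : 1 ≤ s) (hsi : s < i) (red : R →+* κ)
    (hpRi : (p : R) ^ i = 0)
    (hkey : ∀ y : R, red y ≠ 0 → (p : R) ^ (i - 1) * y ≠ 0)
    (e : Matrix (Fin n) (Fin n) R)
    (hne : e.map (fun x => red x) ≠ 0)
    (hnil : IsNilpotent (e.map (fun x => red x))) :
    (1 + ((p : R) ^ s) • e) ^ (p ^ (i - s)) = 1 ∧
    (1 + ((p : R) ^ s) • e) ^ (p ^ (i - s - 1)) ≠ 1 := by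
  classical
  have hsmul : ∀ (T : ℕ) (c : Matrix (Fin n) (Fin n) R),
      ((p : R) ^ T) • c = ((p : Matrix (Fin n) (Fin n) R)) ^ T * c := by
    intro T c
    rw [Algebra.smul_def, map_pow, map_natCast]
  have main : ∀ t : ℕ, ∃ c : Matrix (Fin n) (Fin n) R,
      (1 + ((p : R)) ^ s • e) ^ (p ^ t) = 1 + ((p : R) ^ (s + t)) • c ∧
      c.map (fun x => red x) ≠ 0 ∧ IsNilpotent (c.map (fun x => red x)) := by
    intro t
    induction t with
    | zero => exact ⟨e, by simp, hne, hnil⟩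
    | succ t ih =>
      obtain ⟨c, hb, h0, hn'⟩ := ih
      obtain ⟨g, hcg, hstep⟩ := step_lemma (A := Matrix (Fin n) (Fin n) R) hp (s + t)
        (by omega) c
      refine ⟨c + c ^ 2 * g, ?_, ?_⟩
      · rw [pow_succ, pow_mul, hb, hsmul, hstep, ← hsmul,
          show s + (t + 1) = s + t + 1 from by omega]
      · have hmap : ∀ M : Matrix (Fin n) (Fin n) R,
            M.map (fun x => red x) = red.mapMatrix M := fun M => rfl
        have hcg' : Commute (c.map (fun x => red x)) (g.map (fun x => red x)) := by
          rw [hmap, hmap]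
          exact hcg.map red.mapMatrix
        have hres := nilp_step hcg' h0 hn'
        have hmm : (c + c ^ 2 * g).map (fun x => red x)
            = c.map (fun x => red x) + (c.map (fun x => red x)) ^ 2 * g.map (fun x => red x) := by
          rw [hmap, hmap, hmap, map_add, map_mul, map_pow]
        rw [hmm]
        exact hres
  obtain ⟨c1, hb1, h01, _⟩ := main (i - s)
  obtain ⟨c2, hb2, h02, _⟩ := main (i - s - 1)
  constructor
  · rw [hb1, show s + (i - s) = i from by omega, hpRi, zero_smul, add_zero]
  · rw [hb2, show s + (i - s - 1) = i - 1 from by omega]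
    intro hcon
    have hv : ((p : R) ^ (i - 1)) • c2 = 0 := add_eq_left.mp hcon
    have hex : ∃ j l, red (c2 j l) ≠ 0 := by
      by_contra hall
      push_neg at hall
      apply h02
      ext j l
      simp [Matrix.map_apply, hall j l]
    obtain ⟨j, l, hjl⟩ := hex
    apply hkey (c2 j l) hjl
    have := congrArg (fun M : Matrix (Fin n) (Fin n) R => M j l) hv
    simpa [Matrix.smul_apply, smul_eq_mul] using this

/-- Order of `1 + p^s·e` in matrices over `W_i(k) = W(k)/p^i W(k)`, when the reduction of `e`
modulo `p` is a nonzero nilpotent matrix over `k`: it is exactly `p^{i-s}`. -/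
theorem order_one_add_p_pow_smul (p : ℕ) [Fact p.Prime] (k : Type*) [Field k] [CharP k p]
    [PerfectRing k p] (n i s : ℕ) (hn : 1 ≤ n) (hs : 1 ≤ s) (hsi : s < i)
    (red : (WittVector p k ⧸ (Ideal.span {(p : WittVector p k) ^ i})) →+* k)
    (hred : ∀ x : WittVector p k,
      red (Ideal.Quotient.mk (Ideal.span {(p : WittVector p k) ^ i}) x) = x.coeff 0)
    (e : Matrix (Fin n) (Fin n) (WittVector p k ⧸ (Ideal.span {(p : WittVector p k) ^ i})))
    (hne : e.map (fun x => red x) ≠ 0)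
    (hnil : IsNilpotent (e.map (fun x => red x))) :
    (1 + ((p : WittVector p k ⧸ (Ideal.span {(p : WittVector p k) ^ i})) ^ s) • e) ^
        (p ^ (i - s)) = 1 ∧
    (1 + ((p : WittVector p k ⧸ (Ideal.span {(p : WittVector p k) ^ i})) ^ s) • e) ^
        (p ^ (i - s - 1)) ≠ 1 := by
  have hp : p.Prime := Fact.out
  letI Q := WittVector p k ⧸ (Ideal.span {(p : WittVector p k) ^ i})
  have hmkp : ((p : Q)) = Ideal.Quotient.mk _ (p : WittVector p k) := (map_natCast _ p).symm
  have hpRi : ((p : Q)) ^ i = 0 := by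
    rw [hmkp, ← map_pow, Ideal.Quotient.eq_zero_iff_mem]
    exact Ideal.mem_span_singleton_self _
  have hkey : ∀ y : Q, red y ≠ 0 → (p : Q) ^ (i - 1) * y ≠ 0 := by
    intro y hy hcon
    obtain ⟨z, rfl⟩ := Ideal.Quotient.mk_surjective y
    rw [hmkp, ← map_pow, ← map_mul, Ideal.Quotient.eq_zero_iff_mem,
      Ideal.mem_span_singleton] at hcon
    obtain ⟨w, hw⟩ := hcon
    have hpW : (p : WittVector p k) ≠ 0 := WittVector.p_nonzero p k
    have hz : z = (p : WittVector p k) * w := by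
      have hpow : (p : WittVector p k) ^ i = (p : WittVector p k) ^ (i - 1) * p := by
        rw [← pow_succ]; congr 1; omega
      apply mul_left_cancel₀ (pow_ne_zero (i - 1) hpW)
      rw [hw, hpow, mul_assoc]
    apply hy
    rw [hz, map_mul, map_mul, ← hmkp, map_natCast, CharP.cast_eq_zero, zero_mul]
  exact main_aux p n i s hp hs hsi red hpRi hkey e hne hnil
end

section
/- Let K be an algebraically closed field equipped with a nontrivial multiplicative norm making it a nontrivially normed field, let n ≥ 1, X ∈ M_n(K), and ε > 0. Then there exists an invertible matrix g ∈ GL_n(K) such that Y := g·X·g^{-1} is upper triangular (Y_{ij} = 0 for i > j) and every strictly upper triangular entry satisfies ‖Y_{ij}‖ < ε for i < j. -/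
/-!
Over an algebraically closed field the transpose of an endomorphism `f` has an eigenvector `φ`,
whose kernel is an `f`-invariant hyperplane; induction on the dimension then gives a basis in
which `f` is upper triangular. Conjugating an upper triangular matrix `Y` by
`diag(1, t, …, tⁿ⁻¹)` turns its entry `(i, j)` into `t ^ (j - i) * Y i j`, which leaves the
diagonal alone and, as the norm is nontrivial, makes all entries above it smaller than `ε` for
some small `t ≠ 0`.
-/

open Filter Topology Module Submodule Set

namespace Module.End

variable {K V : Type*} [Field K] [IsAlgClosed K] [AddCommGroup V] [Module K V]
  [FiniteDimensional K V]

theorem exists_dual_ne_zero_ker_invariant [Nontrivial V] (f : End K V) :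
    ∃ φ : Dual K V, φ ≠ 0 ∧ ∀ x ∈ LinearMap.ker φ, f x ∈ LinearMap.ker φ := by
  obtain ⟨μ, hμ⟩ := exists_eigenvalue (Dual.transpose (R := K) f)
  obtain ⟨φ, hφ⟩ := hμ.exists_hasEigenvector
  refine ⟨φ, hφ.2, fun x hx => ?_⟩
  simpa [Dual.transpose_apply, LinearMap.mem_ker.mp hx] using
    LinearMap.congr_fun hφ.apply_eq_smul x

theorem exists_finBasis_apply_mem_span_image_Iic (f : End K V) {n : ℕ}
    (hV : finrank K V = n) : ∃ b : Basis (Fin n) K V, ∀ i, f (b i) ∈ span K (b '' Iic i) := by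
  induction n generalizing V with
  | zero =>
    have := finrank_zero_iff.mp hV
    exact ⟨Basis.empty V, finZeroElim⟩
  | succ n ih =>
    have : Nontrivial V := (finrank_pos_iff (R := K)).mp (by omega)
    obtain ⟨φ, hφ, hf⟩ := f.exists_dual_ne_zero_ker_invariant
    obtain ⟨y, hy⟩ : ∃ y, φ y ≠ 0 := by simpa [DFunLike.ne_iff] using hφ
    obtain ⟨bW, hbW⟩ :=
      ih (f.restrict hf) (by have := Dual.finrank_ker_add_one_of_ne_zero hφ; omega)
    let b := Basis.mkFinSnoc bW y
      (fun c x hx h => by simpa [hy, LinearMap.mem_ker.mp hx] using congr_arg φ h)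
      (fun z => ⟨-(φ z / φ y), by simp [hy]⟩)
    refine ⟨b, Fin.lastCases ?_ fun i => ?_⟩
    · have : Iic (Fin.last n) = univ := eq_univ_of_forall Fin.le_last
      simp [this, b.span_eq]
    · have hb : ∀ j, b (Fin.castSucc j) = bW j := by simp [b]
      have hmap := mem_map_of_mem (f := (LinearMap.ker φ).subtype) (hbW i)
      rw [map_span] at hmap
      rw [hb]
      refine span_mono ?_ hmap
      rintro _ ⟨_, ⟨j, hj, rfl⟩, rfl⟩
      exact ⟨j.castSucc, Fin.castSucc_le_castSucc_iff.2 hj, hb j⟩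

theorem exists_basis_apply_mem_span_image_Iic {ι : Type*} [Fintype ι] [LinearOrder ι]
    (f : End K V) (hV : finrank K V = Fintype.card ι) :
    ∃ b : Basis ι K V, ∀ i, f (b i) ∈ span K (b '' Iic i) := by
  obtain ⟨b, hb⟩ := f.exists_finBasis_apply_mem_span_image_Iic hV
  let e := monoEquivOfFin ι rfl
  refine ⟨b.reindex e.toEquiv, fun i => ?_⟩
  rw [Basis.coe_reindex, image_comp]
  simpa using hb (e.symm i)

end Module.End

theorem LinearMap.toMatrix_isUpperTriangular {R M ι : Type*} [CommRing R] [AddCommGroup M]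
    [Module R M] [Fintype ι] [DecidableEq ι] [LinearOrder ι] (b : Basis ι R M) (f : M →ₗ[R] M)
    (hf : ∀ i, f (b i) ∈ span R (b '' Iic i)) : (LinearMap.toMatrix b b f).IsUpperTriangular := by
  intro i j hij
  rw [LinearMap.toMatrix_apply]
  by_contra h
  exact not_le.2 hij (b.repr_support_subset_of_mem_span _ (hf j) (Finsupp.mem_support_iff.2 h))

namespace Matrix

theorem exists_units_conj_isUpperTriangular {K ι : Type*} [Field K] [IsAlgClosed K] [Fintype ι]
    [DecidableEq ι] [LinearOrder ι] (X : Matrix ι ι K) :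
    ∃ g : (Matrix ι ι K)ˣ,
      ((g : Matrix ι ι K) * X * (g⁻¹ : (Matrix ι ι K)ˣ)).IsUpperTriangular := by
  let e := Pi.basisFun K ι
  obtain ⟨b, hb⟩ := Module.End.exists_basis_apply_mem_span_image_Iic (toLin' X)
    (finrank_fintype_fun_eq_card K)
  refine ⟨⟨b.toMatrix e, e.toMatrix b, b.toMatrix_mul_toMatrix_flip e,
    e.toMatrix_mul_toMatrix_flip b⟩, ?_⟩
  have : b.toMatrix e * X * e.toMatrix b = LinearMap.toMatrix b b (toLin' X) := by
    rw [← basis_toMatrix_mul_linearMap_toMatrix_mul_basis_toMatrix b e b e,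
      LinearMap.toMatrix_eq_toMatrix', LinearMap.toMatrix'_toLin']
  simpa [this] using LinearMap.toMatrix_isUpperTriangular b _ hb

end Matrix

theorem eventually_norm_pow_mul_lt {K : Type*} [NormedRing K] (a : K) {k : ℕ} (hk : k ≠ 0)
    {ε : ℝ} (hε : 0 < ε) : ∀ᶠ t in 𝓝 (0 : K), ‖t ^ k * a‖ < ε := by
  have : Tendsto (fun t : K => ‖t ^ k * a‖) (𝓝 0) (𝓝 0) := by
    simpa [zero_pow hk] using ((continuous_pow k).mul continuous_const).norm.tendsto (0 : K)
  exact this.eventually_lt_const hε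

namespace Matrix

variable {R : Type*} [CommRing R]

def diagonalPowUnits (n : ℕ) (t : Rˣ) : (Matrix (Fin n) (Fin n) R)ˣ :=
  Units.map (diagonalRingHom (Fin n) R).toMonoidHom (MulEquiv.piUnits.symm fun i => t ^ (i : ℕ))

theorem diagonalPowUnits_inv_conj_apply {n : ℕ} (t : Rˣ) (Y : Matrix (Fin n) (Fin n) R)
    (i j : Fin n) :
    ((↑(diagonalPowUnits n t)⁻¹ : Matrix (Fin n) (Fin n) R) * Y *
      (diagonalPowUnits n t : Matrix (Fin n) (Fin n) R)) i j =
      ↑t⁻¹ ^ (i : ℕ) * Y i j * ↑t ^ (j : ℕ) := by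
  simp only [diagonalPowUnits, RingHom.toMonoidHom_eq_coe, Units.coe_map_inv, MonoidHom.coe_coe,
    diagonalRingHom_apply, Units.coe_map, mul_diagonal, diagonal_mul,
    MulEquiv.val_inv_piUnits_symm_apply, Units.inv_eq_val_inv, Units.inv_pow_eq_pow_inv,
    MulEquiv.val_piUnits_symm_apply, Units.val_pow_eq_pow_val]

theorem diagonalPowUnits_inv_conj_apply_of_le {n : ℕ} (t : Rˣ) (Y : Matrix (Fin n) (Fin n) R)
    {i j : Fin n} (hij : i ≤ j) :
    ((↑(diagonalPowUnits n t)⁻¹ : Matrix (Fin n) (Fin n) R) * Y *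
      (diagonalPowUnits n t : Matrix (Fin n) (Fin n) R)) i j = ↑t ^ (j - i : ℕ) * Y i j := by
  obtain ⟨k, hk⟩ := Nat.exists_eq_add_of_le (Fin.le_iff_val_le_val.1 hij)
  have hinv : (↑t⁻¹ : R) ^ (i : ℕ) * ↑t ^ (i : ℕ) = 1 := by
    rw [← mul_pow, Units.inv_mul, one_pow]
  rw [diagonalPowUnits_inv_conj_apply, hk, Nat.add_sub_cancel_left, pow_add]
  linear_combination (Y i j * ↑t ^ k) * hinv

theorem IsUpperTriangular.exists_units_conj_norm_lt {K : Type*} [NontriviallyNormedField K]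
    {n : ℕ} {Y : Matrix (Fin n) (Fin n) K} (hY : Y.IsUpperTriangular) {ε : ℝ} (hε : 0 < ε) :
    ∃ d : (Matrix (Fin n) (Fin n) K)ˣ,
      ((d : Matrix (Fin n) (Fin n) K) * Y *
        (d⁻¹ : (Matrix (Fin n) (Fin n) K)ˣ)).IsUpperTriangular ∧
      ∀ i j, i < j →
        ‖((d : Matrix (Fin n) (Fin n) K) * Y * (d⁻¹ : (Matrix (Fin n) (Fin n) K)ˣ)) i j‖ < ε := by
  have hsmall : ∀ᶠ t in 𝓝 (0 : K), ∀ i j : Fin n, i < j → ‖t ^ (j - i : ℕ) * Y i j‖ < ε :=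
    eventually_all.2 fun i => eventually_all.2 fun j => eventually_imp_distrib_left.2 fun hij =>
      eventually_norm_pow_mul_lt _ (Nat.sub_ne_zero_of_lt hij) hε
  obtain ⟨t, ht, ht0⟩ :=
    ((hsmall.filter_mono nhdsWithin_le_nhds).and (self_mem_nhdsWithin (s := {0}ᶜ))).exists
  refine ⟨(diagonalPowUnits n (Units.mk0 t ht0))⁻¹, fun i j hij => ?_, fun i j hij => ?_⟩
  · rw [inv_inv, diagonalPowUnits_inv_conj_apply, hY hij, mul_zero, zero_mul]
  · rw [inv_inv, diagonalPowUnits_inv_conj_apply_of_le _ _ hij.le]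
    exact ht i j hij

end Matrix

theorem exists_conjugate_upper_triangular_small_general (K : Type*) [NontriviallyNormedField K]
    [IsAlgClosed K] (n : ℕ) (X : Matrix (Fin n) (Fin n) K)
    (ε : ℝ) (hε : 0 < ε) :
    ∃ g : (Matrix (Fin n) (Fin n) K)ˣ,
      (∀ i j : Fin n, j < i → ((g : Matrix (Fin n) (Fin n) K) * X * ((g⁻¹ : (Matrix (Fin n) (Fin n) K)ˣ) : Matrix (Fin n) (Fin n) K)) i j = 0) ∧
      (∀ i j : Fin n, i < j → ‖((g : Matrix (Fin n) (Fin n) K) * X * ((g⁻¹ : (Matrix (Fin n) (Fin n) K)ˣ) : Matrix (Fin n) (Fin n) K)) i j‖ < ε) := by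
  obtain ⟨u, hu⟩ := Matrix.exists_units_conj_isUpperTriangular X
  obtain ⟨d, hd, hsmall⟩ := hu.exists_units_conj_norm_lt hε
  refine ⟨d * u, ?_⟩
  simpa only [mul_inv_rev, Units.val_mul, mul_assoc, id] using
    And.intro (fun i j hij => hd hij) hsmall

/-- Over an algebraically closed nontrivially normed field, every matrix can be conjugated to
an upper triangular matrix whose strictly upper triangular entries have norm `< ε`. -/
theorem exists_conjugate_upper_triangular_small (K : Type*) [NontriviallyNormedField K]
    [IsAlgClosed K] (n : ℕ) (hn : 1 ≤ n) (X : Matrix (Fin n) (Fin n) K)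
    (ε : ℝ) (hε : 0 < ε) :
    ∃ g : (Matrix (Fin n) (Fin n) K)ˣ,
      (∀ i j : Fin n, j < i → ((g : Matrix (Fin n) (Fin n) K) * X * ((g⁻¹ : (Matrix (Fin n) (Fin n) K)ˣ) : Matrix (Fin n) (Fin n) K)) i j = 0) ∧
      (∀ i j : Fin n, i < j → ‖((g : Matrix (Fin n) (Fin n) K) * X * ((g⁻¹ : (Matrix (Fin n) (Fin n) K)ˣ) : Matrix (Fin n) (Fin n) K)) i j‖ < ε) :=
  exists_conjugate_upper_triangular_small_general K n X ε hε
end
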